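/- arXiv:1102.0921 — 9 statements merged into one kernel-verified Lean document; each statement's English description precedes it below -/
import Mathlib

section
/- Let r, s ∈ ℝ. In the ring of formal power series ℝ[[X]], let g = (1 + rX + sX²)⁻¹ and f = X·(1 + rX + sX²)⁻¹, and for each n ∈ ℕ define the polynomial p_n(X) = ∑_{k=0}^{n} ([Xⁿ](g·fᵏ))·Xᵏ ∈ ℝ[X] (so that the Riordan array (g,f) is the coefficient array of the p_n). Then p_0 = 1, p_1 = X − r, and for all n ≥ 1, p_{n+1} = (X − r)·p_n − s·p_{n−1}; in particular each p_n is monic of degree n and the family satisfies a constant-coefficient three-term recurrence. -/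
/-!
Write `u = 1 + rX + sX²`, so that `u * g = 1` and `f = X * g`. Then `u * (g * f ^ (k + 1)) =
X * (g * f ^ k)`, and comparing coefficients of `X ^ (n + 2)` on both sides gives exactly the
coefficient of `X ^ (k + 1)` in `p (n + 2) = (X - r) * p (n + 1) - s * p n`; the constant
coefficient of this identity comes from `u * g = 1` itself. Since `X ^ k ∣ f ^ k`, the Riordan
array is lower triangular, so the truncated sums defining `p n` lose nothing. Monicity and the
degree then follow from the recurrence by induction.
-/

open scoped Polynomial PowerSeries

namespace PowerSeries

variable {R : Type*} [CommRing R]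

noncomputable def riordanRow (g f : R⟦X⟧) (n : ℕ) : R[X] :=
  ∑ k ∈ Finset.range (n + 1), Polynomial.C (coeff n (g * f ^ k)) * Polynomial.X ^ k

theorem coeff_riordanRow_X_mul (g h : R⟦X⟧) (n k : ℕ) :
    (riordanRow g (X * h) n).coeff k = coeff n (g * (X * h) ^ k) := by
  simp only [riordanRow, Polynomial.finsetSum_coeff, Polynomial.coeff_C_mul_X_pow,
    Finset.sum_ite_eq, Finset.mem_range]
  split_ifs with hk
  · rfl
  · rw [mul_pow, mul_left_comm, coeff_X_pow_mul', if_neg (by omega)]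

theorem quadratic_mul_eq (r s : R) (h : R⟦X⟧) :
    (1 + C r * X + C s * X ^ 2) * h = h + X * (C r * h + X * (C s * h)) := by
  ring

theorem coeff_add_two_quadratic_mul (r s : R) (h : R⟦X⟧) (n : ℕ) :
    coeff (n + 2) ((1 + C r * X + C s * X ^ 2) * h) =
      coeff (n + 2) h + r * coeff (n + 1) h + s * coeff n h := by
  rw [quadratic_mul_eq]
  simp only [map_add, coeff_succ_X_mul, coeff_C_mul, add_assoc]

section

variable {r s : R} {g : R⟦X⟧} (hg : (1 + C r * X + C s * X ^ 2) * g = 1)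
include hg

theorem constantCoeff_eq_one_of_quadratic_mul_eq_one : constantCoeff g = 1 := by
  simpa [quadratic_mul_eq] using congrArg constantCoeff hg

theorem coeff_one_eq_neg_of_quadratic_mul_eq_one : coeff 1 g = -r := by
  have h1 := congrArg (coeff 1) hg
  simp only [quadratic_mul_eq, map_add, map_mul, coeff_succ_X_mul, coeff_C_mul, coeff_one,
    coeff_zero_eq_constantCoeff_apply, constantCoeff_X, zero_mul, one_ne_zero, if_false,
    constantCoeff_eq_one_of_quadratic_mul_eq_one hg] at h1
  linear_combination h1

theorem coeff_add_two_of_quadratic_mul_eq_one (n : ℕ) :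
    coeff (n + 2) g = -(r * coeff (n + 1) g) - s * coeff n g := by
  have h2 := coeff_add_two_quadratic_mul r s g n
  rw [hg, coeff_one, if_neg (by omega)] at h2
  linear_combination -h2

theorem riordanRow_zero : riordanRow g (X * g) 0 = 1 := by
  simp [riordanRow, constantCoeff_eq_one_of_quadratic_mul_eq_one hg]

theorem riordanRow_one : riordanRow g (X * g) 1 = Polynomial.X - Polynomial.C r := by
  have hcoeff : coeff 1 (g * (X * g)) = 1 := by
    rw [mul_left_comm, coeff_succ_X_mul]
    simp [constantCoeff_eq_one_of_quadratic_mul_eq_one hg]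
  simp only [riordanRow, Finset.sum_range_succ, Finset.sum_range_zero, pow_zero, mul_one, pow_one,
    hcoeff, coeff_one_eq_neg_of_quadratic_mul_eq_one hg, map_neg, map_one, one_mul]
  ring

theorem riordanRow_add_two (n : ℕ) :
    riordanRow g (X * g) (n + 2) =
      (Polynomial.X - Polynomial.C r) * riordanRow g (X * g) (n + 1) -
        Polynomial.C s * riordanRow g (X * g) n := by
  ext (_ | k)
  · simp [coeff_riordanRow_X_mul, sub_mul, coeff_add_two_of_quadratic_mul_eq_one hg]
  · have hshift :
        (1 + C r * X + C s * X ^ 2) * (g * (X * g) ^ (k + 1)) = X * (g * (X * g) ^ k) := by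
      rw [pow_succ]
      linear_combination (X * (g * (X * g) ^ k)) * hg
    have h2 := coeff_add_two_quadratic_mul r s (g * (X * g) ^ (k + 1)) n
    rw [hshift, coeff_succ_X_mul] at h2
    simp only [coeff_riordanRow_X_mul, sub_mul, Polynomial.coeff_sub, Polynomial.coeff_X_mul,
      Polynomial.coeff_C_mul]
    linear_combination -h2

end

end PowerSeries

namespace Polynomial

variable {R : Type*} [CommRing R] [Nontrivial R]

theorem Monic.X_sub_C_mul_sub_C_mul {p q : R[X]} (hp : p.Monic) (hq : q.natDegree ≤ p.natDegree)
    (a b : R) :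
    ((X - C a) * p - C b * q).Monic ∧ ((X - C a) * p - C b * q).natDegree = p.natDegree + 1 := by
  have hmonic : ((X - C a) * p).Monic := (monic_X_sub_C a).mul hp
  have hdeg : ((X - C a) * p).natDegree = p.natDegree + 1 := by
    rw [(monic_X_sub_C a).natDegree_mul hp, natDegree_X_sub_C, add_comm]
  have hlt : (C b * q).natDegree < ((X - C a) * p).natDegree := by
    rw [hdeg]
    exact (natDegree_C_mul_le b q).trans_lt (Nat.lt_succ_of_le hq)
  refine ⟨hmonic.sub_of_left (degree_lt_degree hlt), ?_⟩
  rw [natDegree_sub_eq_left_of_natDegree_lt hlt, hdeg]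

theorem monic_natDegree_of_three_term_recurrence {p : ℕ → R[X]} (a b : ℕ → R)
    (h0 : p 0 = 1) (h1 : p 1 = X - C (a 0))
    (hrec : ∀ n, p (n + 2) = (X - C (a (n + 1))) * p (n + 1) - C (b n) * p n) (n : ℕ) :
    (p n).Monic ∧ (p n).natDegree = n := by
  induction n using Nat.twoStepInduction with
  | zero => simp [h0]
  | one => rw [h1]; exact ⟨monic_X_sub_C _, natDegree_X_sub_C _⟩
  | more n ih0 ih1 =>
    have hstep := ih1.1.X_sub_C_mul_sub_C_mul (q := p n) (by omega) (a (n + 1)) (b n)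
    rw [ih1.2] at hstep
    rwa [hrec]

end Polynomial

/-- The Riordan array `(1/(1+rx+sx²), x/(1+rx+sx²))` is the coefficient array of a
family of monic orthogonal polynomials satisfying a constant-coefficient
three-term recurrence. -/
theorem riordan_constant_tridiagonal_orthogonal (r s : ℝ)
    (g f : PowerSeries ℝ)
    (hg : g = (1 + PowerSeries.C r * PowerSeries.X + PowerSeries.C s * PowerSeries.X ^ 2)⁻¹)
    (hf : f = PowerSeries.X *
      (1 + PowerSeries.C r * PowerSeries.X + PowerSeries.C s * PowerSeries.X ^ 2)⁻¹)
    (p : ℕ → Polynomial ℝ)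
    (hp : ∀ n, p n = ∑ k ∈ Finset.range (n + 1),
      Polynomial.C (PowerSeries.coeff n (g * f ^ k)) * Polynomial.X ^ k) :
    p 0 = 1 ∧
    p 1 = Polynomial.X - Polynomial.C r ∧
    (∀ n, 1 ≤ n →
      p (n + 1) = (Polynomial.X - Polynomial.C r) * p n - Polynomial.C s * p (n - 1)) ∧
    (∀ n, (p n).Monic ∧ (p n).natDegree = n) := by
  have hug : (1 + PowerSeries.C r * PowerSeries.X + PowerSeries.C s * PowerSeries.X ^ 2) * g = 1 :=
    hg ▸ PowerSeries.mul_inv_cancel _ (by simp)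
  obtain rfl : p = PowerSeries.riordanRow g (PowerSeries.X * g) :=
    funext fun n => by rw [hp, hf, hg]; rfl
  have hrec := PowerSeries.riordanRow_add_two hug
  refine ⟨PowerSeries.riordanRow_zero hug, PowerSeries.riordanRow_one hug, ?_,
    Polynomial.monic_natDegree_of_three_term_recurrence (fun _ => r) (fun _ => s)
      (PowerSeries.riordanRow_zero hug) (PowerSeries.riordanRow_one hug) hrec⟩
  rintro (_ | n) hn
  · omega
  · exact hrec n
end

section
/- Let r ∈ ℝ and s ∈ ℝ with s > 0. In ℝ[[X]] let g = (1 + rX + sX²)⁻¹ and f = X·(1 + rX + sX²)⁻¹, and define p_n(X) = ∑_{k=0}^{n} ([Xⁿ](g·fᵏ))·Xᵏ ∈ ℝ[X]. Then for every n ∈ ℕ and every x ∈ ℝ, p_n(x) = (√s)ⁿ · U_n((x − r)/(2√s)), where U_n is the n-th Chebyshev polynomial of the second kind. -/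
/-!
The row polynomials of a Riordan array `(g, f)` have the generating function
`∑ₙ pₙ(x) Xⁿ = g / (1 - x f)`. For `g = 1/q`, `f = X/q` with `q = 1 + rX + sX²` this is
`1 / (q - xX) = 1 / (1 - (x - r) X + s X²)`. Writing `t = √s` and `x - r = 2ty`, the sequence
`tⁿ Uₙ(y)` satisfies the linear recurrence whose characteristic series is `1 - 2ty X + t² X²`,
so it is the coefficient sequence of the same inverse.
-/

open PowerSeries Finset

namespace PowerSeries

variable {K : Type*} [Field K]

theorem sum_coeff_mul_pow_mul_pow_eq_coeff_mul_inv (g f : K⟦X⟧) (hf : X ∣ f) (x : K) (n : ℕ) :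
    ∑ k ∈ range (n + 1), coeff n (g * f ^ k) * x ^ k = coeff n (g * (1 - C x * f)⁻¹) := by
  set h := (1 - C x * f)⁻¹
  have hunit : constantCoeff (1 - C x * f) ≠ 0 := by
    obtain ⟨f', rfl⟩ := hf
    simp
  have hgeom : ∑ k ∈ range (n + 1), (C x * f) ^ k = h - h * (C x * f) ^ (n + 1) := by
    rw [← mul_one_sub, ← mul_neg_geom_sum, ← mul_assoc, PowerSeries.inv_mul_cancel _ hunit,
      one_mul]
  have htail : coeff n (g * (h * (C x * f) ^ (n + 1))) = 0 := by
    refine X_pow_dvd_iff.mp ?_ n (Nat.lt_succ_self n)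
    exact Dvd.dvd.mul_left (Dvd.dvd.mul_left (pow_dvd_pow_of_dvd (hf.mul_left _) _) _) _
  calc ∑ k ∈ range (n + 1), coeff n (g * f ^ k) * x ^ k
      = coeff n (g * ∑ k ∈ range (n + 1), (C x * f) ^ k) := by
        simp only [mul_sum, map_sum]
        exact sum_congr rfl fun k _ => by
          rw [mul_pow, ← map_pow, mul_left_comm, coeff_C_mul, mul_comm]
    _ = coeff n (g * h) := by rw [hgeom, mul_sub, map_sub, htail, sub_zero]

theorem inv_mul_inv_one_sub_C_mul_X_mul_inv (q : K⟦X⟧) (hq : constantCoeff q ≠ 0) (x : K) :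
    q⁻¹ * (1 - C x * (X * q⁻¹))⁻¹ = (q - C x * X)⁻¹ := by
  have hq' : constantCoeff (q - C x * X) ≠ 0 := by simpa using hq
  have hunit : constantCoeff (1 - C x * (X * q⁻¹)) ≠ 0 := by simp
  have hfac : q - C x * X = (1 - C x * (X * q⁻¹)) * q := by
    linear_combination (C x * X) * PowerSeries.inv_mul_cancel q hq
  rw [eq_inv_iff_mul_eq_one hq', hfac]
  linear_combination
    (1 - C x * (X * q⁻¹))⁻¹ * (1 - C x * (X * q⁻¹)) * PowerSeries.inv_mul_cancel q hq +
      PowerSeries.inv_mul_cancel _ hunit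

theorem mk_eq_inv_one_add_C_mul_X_add_C_mul_X_sq (b c : K) (u : ℕ → K) (h0 : u 0 = 1)
    (h1 : u 1 + b * u 0 = 0) (hrec : ∀ n, u (n + 2) + b * u (n + 1) + c * u n = 0) :
    mk u = (1 + C b * X + C c * X ^ 2)⁻¹ := by
  rw [eq_inv_iff_mul_eq_one (by simp),
    show mk u * (1 + C b * X + C c * X ^ 2) = mk u + C b * (X * mk u) + C c * (X * (X * mk u)) by
      ring]
  ext (_ | _ | n)
  · simp [h0]
  · simpa [coeff_succ_X_mul] using h1
  · simpa [coeff_succ_X_mul, coeff_one] using hrec n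

end PowerSeries

namespace Polynomial.Chebyshev

theorem pow_mul_eval_U_add_two {R : Type*} [CommRing R] (t y : R) (n : ℕ) :
    t ^ (n + 2) * (U R ↑(n + 2)).eval y =
      2 * t * y * (t ^ (n + 1) * (U R ↑(n + 1)).eval y) - t ^ 2 * (t ^ n * (U R n).eval y) := by
  push_cast
  rw [U_add_two]
  simp only [eval_sub, eval_mul, eval_ofNat, eval_X]
  ring

theorem mk_pow_mul_eval_U {K : Type*} [Field K] (t y : K) :
    PowerSeries.mk (fun n => t ^ n * (U K n).eval y) =
      (1 + PowerSeries.C (-(2 * t * y)) * PowerSeries.X +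
        PowerSeries.C (t ^ 2) * PowerSeries.X ^ 2)⁻¹ := by
  refine mk_eq_inv_one_add_C_mul_X_add_C_mul_X_sq _ _ _ (by simp) ?_ fun n => ?_
  · simp only [Nat.cast_one, Nat.cast_zero, U_one, U_zero, eval_mul, eval_ofNat, eval_X, eval_one,
      pow_one, pow_zero, one_mul]
    ring
  · rw [pow_mul_eval_U_add_two]
    ring

end Polynomial.Chebyshev

/-- The polynomials whose coefficient array is the Riordan array
`(1/(1+rx+sx²), x/(1+rx+sx²))` are the modified Chebyshev polynomials of the second
kind `(√s)ⁿ Uₙ((x−r)/(2√s))`. -/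
theorem riordan_modified_chebyshevU (r s : ℝ) (hs : 0 < s)
    (g f : PowerSeries ℝ)
    (hg : g = (1 + PowerSeries.C r * PowerSeries.X + PowerSeries.C s * PowerSeries.X ^ 2)⁻¹)
    (hf : f = PowerSeries.X *
      (1 + PowerSeries.C r * PowerSeries.X + PowerSeries.C s * PowerSeries.X ^ 2)⁻¹)
    (p : ℕ → Polynomial ℝ)
    (hp : ∀ n, p n = ∑ k ∈ Finset.range (n + 1),
      Polynomial.C (PowerSeries.coeff n (g * f ^ k)) * Polynomial.X ^ k) :
    ∀ (n : ℕ) (x : ℝ),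
      (p n).eval x =
        Real.sqrt s ^ n *
          (Polynomial.Chebyshev.U ℝ (n : ℤ)).eval ((x - r) / (2 * Real.sqrt s)) := by
  intro n x
  set t := Real.sqrt s
  set y := (x - r) / (2 * t)
  have hts : t ^ 2 = s := Real.sq_sqrt hs.le
  have hty : 2 * t * y = x - r := by
    have : t ≠ 0 := (Real.sqrt_pos.mpr hs).ne'
    simp only [y]
    field_simp
  have hgf : g * (1 - C x * f)⁻¹ = (1 + C (-(2 * t * y)) * X + C (t ^ 2) * X ^ 2)⁻¹ := by
    rw [hg, hf, inv_mul_inv_one_sub_C_mul_X_mul_inv _ (by simp), hty, hts, map_neg, map_sub]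
    ring_nf
  calc (p n).eval x = ∑ k ∈ range (n + 1), coeff n (g * f ^ k) * x ^ k := by
        simp [hp, Polynomial.eval_finsetSum]
    _ = t ^ n * (Polynomial.Chebyshev.U ℝ n).eval y := by
        rw [sum_coeff_mul_pow_mul_pow_eq_coeff_mul_inv g f (hf ▸ dvd_mul_right X _), hgf,
          ← Polynomial.Chebyshev.mk_pow_mul_eval_U, coeff_mk]
end

section
/- Let a, b, k, λ, μ ∈ ℝ. In ℝ[[X]] let f₁ = X·(1 + aX + bX²)⁻¹. Then substituting f₁ into X·(1 + kX)⁻¹ gives X·(1 + (a+k)X + bX²)⁻¹, and ((1 + λX + μX²)·(1 + aX + bX²)⁻¹)·((1 + kX)⁻¹ ∘ f₁) = (1 + λX + μX²)·(1 + (a+k)X + bX²)⁻¹. Equivalently, in the Riordan group, ((1+λx+μx²)/(1+ax+bx²), x/(1+ax+bx²)) · (1/(1+kx), x/(1+kx)) = ((1+λx+μx²)/(1+(a+k)x+bx²), x/(1+(a+k)x+bx²)). -/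
/-!
`psComp` agrees with Mathlib's `PowerSeries.subst`, which is a ring homomorphism, so substituting
`f₁ = X / D` into `X / (1 + kX)` and `1 / (1 + kX)` gives `f₁ / (1 + k f₁)` and `1 / (1 + k f₁)`.
The whole identity then rests on `1 + k X / D = (D + k X) / D`, and `D + k X` is exactly the
shifted denominator `1 + (a + k) X + b X²`.
-/

/-- Substitution (composition) of formal power series: `psComp h u = h ∘ u`,
the series obtained by substituting `u` (with zero constant term) into `h`. -/
noncomputable def psComp (h u : PowerSeries ℝ) : PowerSeries ℝ :=
  PowerSeries.mk fun n =>
    ∑ k ∈ Finset.range (n + 1), PowerSeries.coeff k h * PowerSeries.coeff n (u ^ k)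

open PowerSeries

namespace PowerSeries

section CommRing

variable {R : Type*} [CommRing R]

theorem coeff_pow_eq_zero_of_lt {u : R⟦X⟧} (hu : constantCoeff u = 0) {n j : ℕ} (h : n < j) :
    coeff n (u ^ j) = 0 :=
  coeff_of_lt_order n <| (Nat.cast_lt.2 h).trans_le (le_order_pow_of_constantCoeff_eq_zero j hu)

theorem subst_one_add_C_mul_X (k : R) {u : R⟦X⟧} (hu : HasSubst u) :
    (1 + C k * X).subst u = 1 + C k * u := by
  simp only [← smul_eq_C_mul, ← coe_substAlgHom hu, map_add, map_one, map_smul, substAlgHom_X]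

end CommRing

variable {k : Type*} [Field k]

theorem subst_inv {g : k⟦X⟧} (hg : constantCoeff g ≠ 0) {u : k⟦X⟧} (hu : HasSubst u) :
    g⁻¹.subst u = (g.subst u)⁻¹ := by
  have hmul : g⁻¹.subst u * g.subst u = 1 := by
    rw [← subst_mul hu, PowerSeries.inv_mul_cancel g hg, ← coe_substAlgHom hu, map_one]
  have hconst : constantCoeff (g.subst u) ≠ 0 :=
    right_ne_zero_of_mul_eq_one (by rw [← map_mul, hmul, map_one])
  exact (eq_inv_iff_mul_eq_one hconst).2 hmul

theorem inv_mul_cancel_left {D : k⟦X⟧} (hD : constantCoeff D ≠ 0) (F : k⟦X⟧) :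
    D⁻¹ * (D * F) = F := by
  rw [← mul_assoc, PowerSeries.inv_mul_cancel D hD, one_mul]

theorem inv_one_add_C_mul_X_mul_inv (c : k) {D : k⟦X⟧} (hD : constantCoeff D ≠ 0) :
    (1 + C c * (X * D⁻¹))⁻¹ = D * (D + C c * X)⁻¹ := by
  have hE : constantCoeff (D + C c * X) ≠ 0 := by simpa using hD
  rw [inv_eq_iff_mul_eq_one (by simp)]
  calc D * (D + C c * X)⁻¹ * (1 + C c * (X * D⁻¹))
      = (D + C c * X)⁻¹ * (D + C c * X * (D * D⁻¹)) := by ring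
    _ = 1 := by rw [PowerSeries.mul_inv_cancel D hD, mul_one, PowerSeries.inv_mul_cancel _ hE]

end PowerSeries

theorem psComp_eq_subst (h : ℝ⟦X⟧) {u : ℝ⟦X⟧} (hu : constantCoeff u = 0) :
    psComp h u = h.subst u := by
  ext n
  rw [psComp, coeff_mk, coeff_subst' (HasSubst.of_constantCoeff_zero' hu)]
  refine (finsum_eq_sum_of_support_subset _ fun j hj => ?_).symm
  rw [Finset.coe_range, Set.mem_Iio, Nat.lt_succ_iff]
  by_contra! hnj
  exact hj (mul_eq_zero_of_right _ (coeff_pow_eq_zero_of_lt hu hnj))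

/-- In the Riordan group,
`((1+λx+μx²)/(1+ax+bx²), x/(1+ax+bx²)) · (1/(1+kx), x/(1+kx))
  = ((1+λx+μx²)/(1+(a+k)x+bx²), x/(1+(a+k)x+bx²))`. -/
theorem riordan_product_shift (a b k l m : ℝ)
    (f₁ : PowerSeries ℝ)
    (hf₁ : f₁ = PowerSeries.X *
      (1 + PowerSeries.C a * PowerSeries.X + PowerSeries.C b * PowerSeries.X ^ 2)⁻¹) :
    psComp (PowerSeries.X * (1 + PowerSeries.C k * PowerSeries.X)⁻¹) f₁ =
      PowerSeries.X * (1 + PowerSeries.C (a + k) * PowerSeries.X +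
        PowerSeries.C b * PowerSeries.X ^ 2)⁻¹ ∧
    ((1 + PowerSeries.C l * PowerSeries.X + PowerSeries.C m * PowerSeries.X ^ 2) *
        (1 + PowerSeries.C a * PowerSeries.X + PowerSeries.C b * PowerSeries.X ^ 2)⁻¹) *
      psComp (1 + PowerSeries.C k * PowerSeries.X)⁻¹ f₁ =
      (1 + PowerSeries.C l * PowerSeries.X + PowerSeries.C m * PowerSeries.X ^ 2) *
        (1 + PowerSeries.C (a + k) * PowerSeries.X +
          PowerSeries.C b * PowerSeries.X ^ 2)⁻¹ := by
  set D : ℝ⟦X⟧ := 1 + C a * X + C b * X ^ 2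
  have hD : constantCoeff D ≠ 0 := by simp [D]
  have hu : constantCoeff f₁ = 0 := by simp [hf₁]
  have hsubst : HasSubst f₁ := .of_constantCoeff_zero' hu
  have hshift : 1 + C (a + k) * X + C b * X ^ 2 = D + C k * X := by rw [map_add]; ring
  have hgeom : psComp (1 + C k * X)⁻¹ f₁ = D * (D + C k * X)⁻¹ := by
    rw [psComp_eq_subst _ hu, subst_inv (by simp) hsubst, subst_one_add_C_mul_X k hsubst, hf₁,
      inv_one_add_C_mul_X_mul_inv k hD]
  rw [hshift]
  constructor
  · rw [psComp_eq_subst _ hu, subst_mul hsubst, subst_X hsubst, ← psComp_eq_subst _ hu, hgeom, hf₁,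
      mul_assoc, inv_mul_cancel_left hD]
  · rw [hgeom, mul_assoc, inv_mul_cancel_left hD]
end

section
/- Let r ∈ ℝ and n ∈ ℕ. Let P̃_m(r) = ∑_{k=0}^{m} (−1)^{m−k}·C(m+k,2k)·C(2k,k)·rᵏ denote the shifted Legendre polynomials evaluated at r. Then the Hankel determinant of the sequence (P̃_m(r))_{m≥0}, namely the determinant of the (n+1)×(n+1) matrix whose (i,j) entry is P̃_{i+j}(r) for 0 ≤ i,j ≤ n, equals 2ⁿ·(r(r−1))^{n(n+1)/2}. -/
/-!
Write `p = (X + r) (X + r - 1) = X² + (2r - 1) X + r(r - 1)`. Since `p` is the Taylor shift of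
`X² - X` to `r`, Rodrigues' formula reads `P̃ₘ(r) = [Xᵐ] pᵐ`. The triangle `L m k = [X^(m+k)] pᵐ`
obeys the Jacobi recurrence `L (m+1) k = L m (k-1) + b L m k + λ_(k+1) L m (k+1)` with
`b = 2r - 1`, `λ₁ = 2r(r - 1)` and `λₖ = r(r - 1)` for `k ≥ 2`; multiplying by `p` gives it for
`k ≥ 1`, and for `k = 0` it needs the symmetry `[X^(m-1)] pᵐ = r(r - 1) [X^(m+1)] pᵐ`.
For any such triangle the Hankel matrix of its first column factors as `L D Lᵀ`, where `L` is
unitriangular and `D = diag(λ₁ ⋯ λₖ)`, so the determinant is `∏ₖ λ₁ ⋯ λₖ`.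
-/

open Finset Polynomial

variable {R : Type*} [CommRing R]

/-- `L m k` is the weight of the Motzkin paths of length `m` from height `0` to height `k`, with
level steps at height `k` weighted `b k` and down steps from height `k` weighted `lam k`; its first
column is the moment sequence of the J-fraction with coefficients `b` and `lam`. -/
structure IsStieltjesTableau (b lam : ℕ → R) (L : ℕ → ℕ → R) : Prop where
  zero_apply : ∀ k, L 0 k = if k = 0 then 1 else 0
  succ_apply_zero : ∀ m, L (m + 1) 0 = b 0 * L m 0 + lam 1 * L m 1
  succ_apply_succ : ∀ m k,
    L (m + 1) (k + 1) = L m k + b (k + 1) * L m (k + 1) + lam (k + 2) * L m (k + 2)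

def stieltjesWeight (lam : ℕ → R) (k : ℕ) : R := ∏ i ∈ range k, lam (i + 1)

@[simp]
theorem stieltjesWeight_zero (lam : ℕ → R) : stieltjesWeight lam 0 = 1 := prod_range_zero _

theorem stieltjesWeight_succ (lam : ℕ → R) (k : ℕ) :
    stieltjesWeight lam (k + 1) = stieltjesWeight lam k * lam (k + 1) :=
  prod_range_succ _ _

namespace IsStieltjesTableau

variable {b lam : ℕ → R} {L : ℕ → ℕ → R}

theorem eq_zero_of_lt (h : IsStieltjesTableau b lam L) {m k : ℕ} (hmk : m < k) : L m k = 0 := by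
  induction m generalizing k with
  | zero => simp [h.zero_apply, hmk.ne']
  | succ m ih =>
    obtain ⟨k, rfl⟩ : ∃ k', k = k' + 1 := ⟨k - 1, by omega⟩
    rw [h.succ_apply_succ, ih (by omega), ih (by omega), ih (by omega)]
    ring

theorem apply_self (h : IsStieltjesTableau b lam L) (m : ℕ) : L m m = 1 := by
  induction m with
  | zero => simp [h.zero_apply]
  | succ m ih =>
    rw [h.succ_apply_succ, ih, h.eq_zero_of_lt (by omega), h.eq_zero_of_lt (by omega)]
    ring

/-- The right-hand side is symmetric in `i` and `j`. -/
theorem sum_succ_mul_mul_stieltjesWeight (h : IsStieltjesTableau b lam L) {i j N : ℕ}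
    (hj : j < N) :
    ∑ k ∈ range N, L (i + 1) k * L j k * stieltjesWeight lam k =
      ∑ k ∈ range N, (b k * L i k * L j k * stieltjesWeight lam k +
        (L i k * L j (k + 1) + L i (k + 1) * L j k) * stieltjesWeight lam (k + 1)) := by
  obtain ⟨M, rfl⟩ : ∃ M, N = M + 1 := ⟨N - 1, by omega⟩
  simp only [add_mul, sum_add_distrib]
  rw [sum_range_succ', sum_range_succ' (fun k => b k * _ * _ * _), sum_range_succ,
    sum_range_succ' (fun k => L i (k + 1) * _ * _), h.eq_zero_of_lt (by omega : j < M + 1)]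
  have hbulk : ∑ k ∈ range M, L (i + 1) (k + 1) * L j (k + 1) * stieltjesWeight lam (k + 1) =
      ∑ k ∈ range M, b (k + 1) * L i (k + 1) * L j (k + 1) * stieltjesWeight lam (k + 1) +
        ∑ k ∈ range M, L i k * L j (k + 1) * stieltjesWeight lam (k + 1) +
        ∑ k ∈ range M, L i (k + 1 + 1) * L j (k + 1) * stieltjesWeight lam (k + 1 + 1) := by
    rw [← sum_add_distrib, ← sum_add_distrib]
    refine sum_congr rfl fun k _ => ?_
    rw [h.succ_apply_succ, stieltjesWeight_succ lam (k + 1)]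
    ring
  rw [hbulk, h.succ_apply_zero, stieltjesWeight_succ lam 0, stieltjesWeight_zero]
  ring

theorem sum_mul_mul_stieltjesWeight_of_add_lt (h : IsStieltjesTableau b lam L) {i j N : ℕ}
    (hij : i + j < N) :
    ∑ k ∈ range N, L i k * L j k * stieltjesWeight lam k = L (i + j) 0 := by
  induction i generalizing j with
  | zero =>
    rw [sum_eq_single 0 (fun k _ hk => by simp [h.zero_apply, hk]) (by simp; omega)]
    simp [h.zero_apply]
  | succ i ih =>
    have hshift : ∑ k ∈ range N, L (i + 1) k * L j k * stieltjesWeight lam k =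
        ∑ k ∈ range N, L i k * L (j + 1) k * stieltjesWeight lam k := by
      rw [h.sum_succ_mul_mul_stieltjesWeight (by omega)]
      calc _ = ∑ k ∈ range N, (b k * L j k * L i k * stieltjesWeight lam k +
              (L j k * L i (k + 1) + L j (k + 1) * L i k) * stieltjesWeight lam (k + 1)) :=
            sum_congr rfl fun k _ => by ring
        _ = ∑ k ∈ range N, L (j + 1) k * L i k * stieltjesWeight lam k :=
            (h.sum_succ_mul_mul_stieltjesWeight (by omega)).symm
        _ = _ := sum_congr rfl fun k _ => by ring
    rw [hshift, ih (by omega), show i + (j + 1) = i + 1 + j by omega]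

theorem sum_mul_mul_stieltjesWeight (h : IsStieltjesTableau b lam L) {i j N : ℕ} (hi : i < N) :
    ∑ k ∈ range N, L i k * L j k * stieltjesWeight lam k = L (i + j) 0 := by
  rw [← h.sum_mul_mul_stieltjesWeight_of_add_lt (by omega : i + j < N + j)]
  refine sum_subset (range_subset_range.mpr (by omega)) fun k _ hk => ?_
  rw [h.eq_zero_of_lt (by simp at hk; omega), zero_mul, zero_mul]

theorem det_hankel (h : IsStieltjesTableau b lam L) (n : ℕ) :
    (Matrix.of fun i j : Fin (n + 1) => L (i + j) 0).det =
      ∏ k ∈ range (n + 1), stieltjesWeight lam k := by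
  let A : Matrix (Fin (n + 1)) (Fin (n + 1)) R := .of fun i k => L i k
  have hA : A.det = 1 := by
    rw [Matrix.det_of_isLowerTriangular A fun i k hik => h.eq_zero_of_lt hik]
    exact prod_eq_one fun i _ => h.apply_self i
  have hfactor : (Matrix.of fun i j : Fin (n + 1) => L (i + j) 0) =
      A * Matrix.diagonal (fun k : Fin (n + 1) => stieltjesWeight lam k) * A.transpose := by
    ext i j
    rw [Matrix.mul_apply]
    simp only [Matrix.mul_diagonal, Matrix.transpose_apply, Matrix.of_apply, A]
    rw [Fin.sum_univ_eq_sum_range (fun k => L i k * stieltjesWeight lam k * L j k),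
      ← h.sum_mul_mul_stieltjesWeight i.isLt]
    exact sum_congr rfl fun k _ => by ring
  rw [hfactor, Matrix.det_mul, Matrix.det_mul, Matrix.det_transpose, hA, Matrix.det_diagonal,
    Fin.prod_univ_eq_prod_range (stieltjesWeight lam), one_mul, mul_one]

end IsStieltjesTableau

theorem stieltjesWeight_ite_succ (q : R) (k : ℕ) :
    stieltjesWeight (fun k => if k = 1 then 2 * q else q) (k + 1) = 2 * q ^ (k + 1) := by
  induction k with
  | zero => simp [stieltjesWeight]
  | succ k ih =>
    rw [stieltjesWeight_succ, ih, if_neg (by omega)]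
    ring

theorem prod_stieltjesWeight_ite (q : R) (n : ℕ) :
    ∏ k ∈ range (n + 1), stieltjesWeight (fun k => if k = 1 then 2 * q else q) k =
      2 ^ n * q ^ (n * (n + 1) / 2) := by
  have hgauss : ∑ k ∈ range n, (k + 1) = n * (n + 1) / 2 := by
    have := sum_range_id (n + 1)
    rw [sum_range_succ'] at this
    simpa [mul_comm] using this
  rw [prod_range_succ', stieltjesWeight_zero, mul_one]
  simp only [stieltjesWeight_ite_succ]
  rw [prod_mul_distrib, prod_const, card_range, prod_pow_eq_pow_sum, hgauss]

theorem X_add_C_mul_X_add_C (u v : R) :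
    (X + C u) * (X + C v) = X ^ 2 + C (u + v) * X + C (u * v) := by
  simp only [C_add, C_mul]
  ring

theorem coeff_X_add_C_mul_X_add_C_one (u v : R) : ((X + C u) * (X + C v)).coeff 1 = u + v := by
  simp [X_add_C_mul_X_add_C, coeff_C]

theorem coeff_mul_X_add_C_mul_X_add_C (u v : R) (G : R[X]) (n : ℕ) :
    (G * ((X + C u) * (X + C v))).coeff (n + 2) =
      G.coeff n + (u + v) * G.coeff (n + 1) + u * v * G.coeff (n + 2) := by
  rw [X_add_C_mul_X_add_C, mul_add, mul_add, coeff_add, coeff_add, coeff_mul_X_pow,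
    mul_comm (C _), ← mul_assoc, coeff_mul_C, coeff_mul_C, coeff_mul_X]
  ring

/-- Both sides equal `∑ i < m + 1, C(m+1, i) C(m+1, i+1) u^(m+1-i) v^(i+1)`. -/
theorem coeff_X_add_C_mul_X_add_C_pow_succ (u v : R) (m : ℕ) :
    (((X + C u) * (X + C v)) ^ (m + 1)).coeff m =
      u * v * (((X + C u) * (X + C v)) ^ (m + 1)).coeff (m + 2) := by
  simp only [mul_pow, coeff_mul, Nat.sum_antidiagonal_eq_sum_range_succ_mk, coeff_X_add_C_pow]
  conv_rhs => rw [sum_range_succ', sum_range_succ]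
  simp only [Nat.sub_zero, Nat.choose_succ_self, Nat.cast_zero, mul_zero, zero_mul, add_zero,
    mul_sum]
  refine sum_congr rfl fun i hi => ?_
  have hi : i ≤ m := Nat.lt_succ_iff.mp (mem_range.mp hi)
  rw [Nat.choose_symm_of_eq_add (by omega : m + 1 = (m - i) + (i + 1)),
    Nat.choose_symm_of_eq_add (by omega : m + 1 = (m + 2 - (i + 1)) + i),
    show m + 1 - i = m + 1 - (i + 1) + 1 by omega,
    show m + 1 - (m - i) = m + 1 - (m + 2 - (i + 1)) + 1 by omega]
  ring

noncomputable def powCoeffTableau (p : R[X]) (m k : ℕ) : R := (p ^ m).coeff (m + k)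

theorem isStieltjesTableau_powCoeffTableau (u v : R) :
    IsStieltjesTableau (fun _ => u + v) (fun k => if k = 1 then 2 * (u * v) else u * v)
      (powCoeffTableau ((X + C u) * (X + C v))) where
  zero_apply k := by simp [powCoeffTableau, coeff_one]
  succ_apply_zero m := by
    cases m with
    | zero => simp [powCoeffTableau, coeff_X_add_C_mul_X_add_C_one, coeff_one]
    | succ m =>
      simp only [powCoeffTableau, add_zero, if_pos, pow_succ _ (m + 1),
        coeff_mul_X_add_C_mul_X_add_C, coeff_X_add_C_mul_X_add_C_pow_succ]
      ring
  succ_apply_succ m k := by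
    rw [powCoeffTableau, show m + 1 + (k + 1) = m + k + 2 by omega, pow_succ,
      coeff_mul_X_add_C_mul_X_add_C]
    simp only [powCoeffTableau, add_assoc, Nat.reduceEqDiff, ↓reduceIte]

theorem Nat.add_choose_two_mul_mul_choose (m k : ℕ) :
    (m + k).choose (2 * k) * (2 * k).choose k = (m + k).choose m * m.choose k := by
  rw [Nat.choose_mul (by omega), two_mul, Nat.add_sub_cancel, Nat.add_sub_cancel,
    Nat.choose_symm_add]

theorem X_add_C_mul_X_add_C_sub_one_eq_taylor (r : R) :
    (X + C r) * (X + C (r - 1)) = taylor r (X ^ 2 - X) := by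
  simp only [map_sub, taylor_X_pow, taylor_X, C_1]
  ring

theorem X_sq_sub_X_pow (m : ℕ) :
    ((X : R[X]) ^ 2 - X) ^ m =
      ∑ k ∈ range (m + 1), monomial (m + k) ((-1) ^ (m - k) * (m.choose k : R)) := by
  rw [sub_eq_add_neg, add_pow]
  refine sum_congr rfl fun k hk => ?_
  rw [neg_pow, ← C_mul_X_pow_eq_monomial,
    show m + k = 2 * k + (m - k) by have := mem_range.mp hk; omega, pow_add, pow_mul]
  simp only [C_mul, C_pow, C_neg, C_1, map_natCast]
  ring

/-- Rodrigues' formula: the left-hand side is the `m`-th Hasse derivative of `(X² - X)ᵐ` at `r`. -/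
theorem coeff_X_add_C_mul_X_add_C_sub_one_pow_self (r : R) (m : ℕ) :
    (((X + C r) * (X + C (r - 1))) ^ m).coeff m = ∑ k ∈ range (m + 1),
      (-1 : R) ^ (m - k) * ((m + k).choose (2 * k) : R) * ((2 * k).choose k : R) * r ^ k := by
  rw [X_add_C_mul_X_add_C_sub_one_eq_taylor, ← taylor_pow, taylor_coeff, X_sq_sub_X_pow, map_sum,
    eval_finsetSum]
  refine sum_congr rfl fun k _ => ?_
  have hchoose := congrArg (Nat.cast : ℕ → R) (Nat.add_choose_two_mul_mul_choose m k)
  push_cast at hchoose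
  rw [hasseDeriv_monomial, eval_monomial, Nat.add_sub_cancel_left]
  linear_combination -(-1 : R) ^ (m - k) * r ^ k * hchoose

/-- The Hankel transform of the sequence of shifted Legendre polynomial values
`P̃ₘ(r)` is `hₙ = 2ⁿ·(r(r−1))^(n(n+1)/2)`. -/
theorem hankel_shifted_legendre (r : ℝ) (n : ℕ) (P : ℕ → ℝ)
    (hP : ∀ m, P m = ∑ k ∈ Finset.range (m + 1),
      (-1 : ℝ) ^ (m - k) * ((m + k).choose (2 * k) : ℝ) * ((2 * k).choose k : ℝ) * r ^ k) :
    Matrix.det (Matrix.of fun i j : Fin (n + 1) => P ((i : ℕ) + (j : ℕ))) =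
      2 ^ n * (r * (r - 1)) ^ (n * (n + 1) / 2) := by
  have hP_eq : P = fun m => powCoeffTableau ((X + C r) * (X + C (r - 1))) m 0 := by
    funext m
    rw [hP, powCoeffTableau, add_zero, coeff_X_add_C_mul_X_add_C_sub_one_pow_self]
  subst hP_eq
  rw [(isStieltjesTableau_powCoeffTableau r (r - 1)).det_hankel, prod_stieltjesWeight_ite]
end

section
/- Let r ∈ ℝ with r > 1 and let n ∈ ℕ. Then the shifted Legendre polynomial value P̃_n(r) = ∑_{k=0}^{n} (−1)^{n−k}·C(n+k,2k)·C(2k,k)·rᵏ has the moment representation P̃_n(r) = (1/π)·∫_{2r−1−2√(r(r−1))}^{2r−1+2√(r(r−1))} xⁿ/√(−x² + 2(2r−1)x − 1) dx. -/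
open Real MeasureTheory Finset

/-! Substituting `x = 2r - 1 + 2√(r(r-1)) cos θ` turns the integral into
`∫₀^π (2r - 1 + 2√(r(r-1)) cos θ)ⁿ dθ`, and the integrand is `|(√(r-1) + √r e^{iθ})ⁿ|²`.
Expanding the `n`-th power binomially, orthogonality of the `cos (m θ)` on `[0, π]` leaves
`π ∑ C(n,j)² rʲ (r-1)ⁿ⁻ʲ`, which becomes `π P̃ₙ(r)` after expanding `(r-1)ⁿ⁻ʲ` and applying
Vandermonde's identity. -/

theorem integral_div_sqrt_one_sub_sq (h : ℝ → ℝ) :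
    ∫ t in (-1)..1, h t / √(1 - t ^ 2) = ∫ θ in 0..π, h (cos θ) := by
  have himage : cos '' Set.Ioo 0 π = Set.Ioo (-1) 1 := by
    simpa using cosPartialHomeomorph.image_source_eq_target
  rw [intervalIntegral.integral_of_le (by norm_num), intervalIntegral.integral_of_le pi_pos.le,
    integral_Ioc_eq_integral_Ioo, integral_Ioc_eq_integral_Ioo, ← himage,
    integral_image_eq_integral_abs_deriv_smul measurableSet_Ioo
      (fun θ _ => (hasDerivAt_cos θ).hasDerivWithinAt) (injOn_cos.mono Set.Ioo_subset_Icc_self)]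
  refine setIntegral_congr_fun measurableSet_Ioo fun θ hθ => ?_
  have hsin : 0 < sin θ := sin_pos_of_pos_of_lt_pi hθ.1 hθ.2
  rw [← sin_sq, sqrt_sq hsin.le, abs_neg, abs_of_pos hsin, smul_eq_mul,
    mul_div_cancel₀ _ hsin.ne']

theorem integral_div_sqrt_sq_sub_sq (g : ℝ → ℝ) (a : ℝ) {b : ℝ} (hb : 0 < b) :
    ∫ x in (a - b)..(a + b), g x / √(b ^ 2 - (x - a) ^ 2) = ∫ θ in 0..π, g (a + b * cos θ) := by
  have hsub := intervalIntegral.integral_comp_mul_add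
    (fun x => g x / √(b ^ 2 - (x - a) ^ 2)) hb.ne' a (a := -1) (b := 1)
  rw [show b * -1 + a = a - b by ring, show b * 1 + a = a + b by ring] at hsub
  have hscale : ∀ t : ℝ, g (b * t + a) / √(b ^ 2 - (b * t + a - a) ^ 2) =
      b⁻¹ * ((fun t => g (a + b * t)) t / √(1 - t ^ 2)) := by
    intro t
    rw [show b ^ 2 - (b * t + a - a) ^ 2 = b ^ 2 * (1 - t ^ 2) by ring,
      sqrt_mul (sq_nonneg b), sqrt_sq hb.le, add_comm (b * t)]
    field_simp
  simp only [hscale, intervalIntegral.integral_const_mul, integral_div_sqrt_one_sub_sq] at hsub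
  rw [smul_eq_mul] at hsub
  exact (mul_left_cancel₀ (inv_ne_zero hb.ne') hsub).symm

theorem integral_cos_nat_sub_mul (j l : ℕ) :
    ∫ θ in 0..π, cos (((j : ℝ) - l) * θ) = if j = l then π else 0 := by
  split_ifs with hjl
  · simp [hjl]
  · have hne : ((j : ℝ) - l) ≠ 0 := sub_ne_zero.2 (by exact_mod_cast hjl)
    rw [intervalIntegral.integral_comp_mul_left cos hne, integral_cos, mul_zero, sin_zero,
      show ((j : ℝ) - l) = ((j - l : ℤ) : ℝ) by push_cast; ring, sin_int_mul_pi]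
    simp

theorem normSq_sum_mul_exp (s : Finset ℕ) (p : ℕ → ℝ) (θ : ℝ) :
    Complex.normSq (∑ j ∈ s, (p j : ℂ) * Complex.exp (↑(j * θ) * Complex.I)) =
      ∑ j ∈ s, ∑ l ∈ s, p j * p l * cos (((j : ℝ) - l) * θ) := by
  have hre : (∑ j ∈ s, (p j : ℂ) * Complex.exp (↑(j * θ) * Complex.I)).re =
      ∑ j ∈ s, p j * cos (j * θ) := by
    simp only [Complex.re_sum, Complex.re_ofReal_mul, Complex.exp_ofReal_mul_I_re]
  have him : (∑ j ∈ s, (p j : ℂ) * Complex.exp (↑(j * θ) * Complex.I)).im =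
      ∑ j ∈ s, p j * sin (j * θ) := by
    simp only [Complex.im_sum, Complex.im_ofReal_mul, Complex.exp_ofReal_mul_I_im]
  rw [Complex.normSq_apply, hre, him, sum_mul_sum, sum_mul_sum, ← sum_add_distrib]
  refine sum_congr rfl fun j _ => ?_
  rw [← sum_add_distrib]
  refine sum_congr rfl fun l _ => ?_
  rw [sub_mul, cos_sub]
  ring

theorem integral_normSq_sum_mul_exp (s : Finset ℕ) (p : ℕ → ℝ) :
    ∫ θ in 0..π, Complex.normSq (∑ j ∈ s, (p j : ℂ) * Complex.exp (↑(j * θ) * Complex.I)) =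
      π * ∑ j ∈ s, p j ^ 2 := by
  have hint : ∀ j l : ℕ, IntervalIntegrable (fun θ => p j * p l * cos (((j : ℝ) - l) * θ))
      volume 0 π := fun j l => (by fun_prop : Continuous _).intervalIntegrable _ _
  simp_rw [normSq_sum_mul_exp]
  rw [intervalIntegral.integral_finsetSum fun j _ =>
    (continuous_finsetSum s fun l _ => by fun_prop).intervalIntegrable _ _]
  simp_rw [intervalIntegral.integral_finsetSum fun l _ => hint _ l,
    intervalIntegral.integral_const_mul, integral_cos_nat_sub_mul, mul_ite, mul_zero,
    sum_ite_eq, mul_sum]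
  refine sum_congr rfl fun j hj => ?_
  rw [if_pos hj]
  ring

theorem integral_sq_add_sq_add_mul_cos_pow (c s : ℝ) (n : ℕ) :
    ∫ θ in 0..π, (c ^ 2 + s ^ 2 + 2 * c * s * cos θ) ^ n =
      π * ∑ j ∈ range (n + 1), (n.choose j : ℝ) ^ 2 * (s ^ 2) ^ j * (c ^ 2) ^ (n - j) := by
  have hnormSq : ∀ θ : ℝ, (c ^ 2 + s ^ 2 + 2 * c * s * cos θ) ^ n = Complex.normSq
      (∑ j ∈ range (n + 1), ((n.choose j * s ^ j * c ^ (n - j) : ℝ) : ℂ) *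
        Complex.exp (↑(j * θ) * Complex.I)) := by
    intro θ
    have hsum : ∑ j ∈ range (n + 1), ((n.choose j * s ^ j * c ^ (n - j) : ℝ) : ℂ) *
        Complex.exp (↑(j * θ) * Complex.I) = (s * Complex.exp (θ * Complex.I) + c) ^ n := by
      rw [add_pow]
      refine sum_congr rfl fun j _ => ?_
      rw [mul_pow, ← Complex.exp_nat_mul]
      push_cast
      ring_nf
    rw [hsum, map_pow, Complex.normSq_apply]
    simp only [Complex.add_re, Complex.add_im, Complex.re_ofReal_mul, Complex.im_ofReal_mul,
      Complex.exp_ofReal_mul_I_re, Complex.exp_ofReal_mul_I_im, Complex.ofReal_re,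
      Complex.ofReal_im]
    congr 1
    linear_combination (-s ^ 2) * sin_sq_add_cos_sq θ
  simp_rw [hnormSq, integral_normSq_sum_mul_exp, mul_pow, ← pow_mul]
  congr 1
  refine sum_congr rfl fun j _ => ?_
  ring

theorem Nat.sum_range_choose_mul_choose (n k : ℕ) :
    ∑ j ∈ range (k + 1), n.choose j * k.choose j = (n + k).choose k := by
  rw [Nat.add_choose_eq, Nat.sum_antidiagonal_eq_sum_range_succ_mk]
  refine sum_congr rfl fun j hj => ?_
  rw [Nat.choose_symm (mem_range_succ_iff.mp hj)]

theorem Nat.sum_range_choose_sq_mul_choose_sub (n k : ℕ) :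
    ∑ j ∈ range (k + 1), n.choose j ^ 2 * (n - j).choose (k - j) =
      (n + k).choose (2 * k) * (2 * k).choose k := by
  have hterm : ∀ j ∈ range (k + 1),
      n.choose j ^ 2 * (n - j).choose (k - j) = n.choose k * (n.choose j * k.choose j) := by
    intro j hj
    rw [sq, mul_assoc, ← Nat.choose_mul (mem_range_succ_iff.mp hj)]
    ring
  rw [sum_congr rfl hterm, ← mul_sum, Nat.sum_range_choose_mul_choose,
    Nat.choose_mul (by omega : k ≤ 2 * k), Nat.add_sub_cancel, two_mul, Nat.add_sub_cancel]
  ring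

theorem sum_choose_sq_mul_pow_mul_sub_one_pow {R : Type*} [CommRing R] (n : ℕ) (u : R) :
    ∑ j ∈ range (n + 1), (n.choose j : R) ^ 2 * u ^ j * (u - 1) ^ (n - j) =
      ∑ k ∈ range (n + 1),
        (-1) ^ (n - k) * ((n + k).choose (2 * k) : R) * ((2 * k).choose k : R) * u ^ k := by
  have hexpand : ∀ j ∈ range (n + 1), (n.choose j : R) ^ 2 * u ^ j * (u - 1) ^ (n - j) =
      ∑ k ∈ Ico j (n + 1), ((n.choose j ^ 2 * (n - j).choose (k - j) : ℕ) : R) *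
        ((-1) ^ (n - k) * u ^ k) := by
    intro j hj
    have hjn : j ≤ n := mem_range_succ_iff.mp hj
    rw [sum_Ico_eq_sum_range, show n + 1 - j = n - j + 1 by omega, sub_eq_add_neg, add_pow,
      mul_sum]
    refine sum_congr rfl fun i hi => ?_
    have hi : i ≤ n - j := mem_range_succ_iff.mp hi
    rw [show j + i - j = i by omega, show n - (j + i) = n - j - i by omega]
    push_cast
    ring
  rw [sum_congr rfl hexpand, range_eq_Ico, sum_Ico_Ico_comm]
  refine sum_congr rfl fun k _ => ?_
  rw [← sum_mul, ← Nat.cast_sum, ← range_eq_Ico, Nat.sum_range_choose_sq_mul_choose_sub]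
  push_cast
  ring

/-- Moment representation of the shifted Legendre polynomials: for `r > 1`,
`P̃ₙ(r) = (1/π)·∫ xⁿ/√(−x²+2(2r−1)x−1) dx` over the interval where the
quadratic is positive. -/
theorem shifted_legendre_moment_integral (r : ℝ) (hr : 1 < r) (n : ℕ) :
    ∑ k ∈ Finset.range (n + 1),
      (-1 : ℝ) ^ (n - k) * ((n + k).choose (2 * k) : ℝ) * ((2 * k).choose k : ℝ) * r ^ k =
    (1 / Real.pi) *
      ∫ x in (2 * r - 1 - 2 * Real.sqrt (r * (r - 1)))..(2 * r - 1 + 2 * Real.sqrt (r * (r - 1))),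
        x ^ n / Real.sqrt (-x ^ 2 + 2 * (2 * r - 1) * x - 1) := by
  have hr₀ : 0 ≤ r - 1 := by linarith
  have hb : 0 < 2 * √(r * (r - 1)) := by
    have : 0 < r * (r - 1) := mul_pos (by linarith) (by linarith)
    positivity
  have hquad : ∀ x : ℝ, -x ^ 2 + 2 * (2 * r - 1) * x - 1 =
      (2 * √(r * (r - 1))) ^ 2 - (x - (2 * r - 1)) ^ 2 := by
    intro x
    rw [mul_pow, sq_sqrt (by positivity)]
    ring
  have hcos : ∀ θ : ℝ, 2 * r - 1 + 2 * √(r * (r - 1)) * cos θ =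
      √(r - 1) ^ 2 + √r ^ 2 + 2 * √(r - 1) * √r * cos θ := by
    intro θ
    rw [sq_sqrt hr₀, sq_sqrt (by linarith), sqrt_mul (by linarith) (r - 1)]
    ring
  simp_rw [hquad, integral_div_sqrt_sq_sub_sq (· ^ n) (2 * r - 1) hb, hcos,
    integral_sq_add_sq_add_mul_cos_pow, sq_sqrt hr₀, sq_sqrt (by linarith : 0 ≤ r),
    sum_choose_sq_mul_pow_mul_sub_one_pow]
  field_simp
end

section
/- Let r ∈ ℝ and n ∈ ℕ. Let P_m(r) = ∑_{k=0}^{m} (−1)ᵏ·C(m,k)²·((1+r)/2)^{m−k}·((1−r)/2)ᵏ denote the Legendre polynomials evaluated at r. Then the determinant of the (n+1)×(n+1) Hankel matrix whose (i,j) entry is P_{i+j}(r) for 0 ≤ i,j ≤ n equals (r²−1)^{n(n+1)/2} / 2^{n²}. -/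
/-!
The values `P_m(r)` are the moments `L(X^m)` of the linear functional `L f = [T⁰] f(J)` on
`ℝ[X]`, where `J = T + r + q T⁻¹` is a Laurent polynomial and `q = (r² - 1)/4`: since
`J = T⁻¹ (T + (1+r)/2) (T + (r-1)/2)`, the constant term of `J^m` is the Legendre sum.
The Dickson polynomials satisfy `D_k(x + y, q) = x^k + y^k` whenever `x y = q`, so the shifted
polynomials `p_k = D_k(X - r, q)` are sent to `p_k(J) = T^k + q^k T^{-k}`. Hence they are
orthogonal for `L`, with `L(p_k²) = 2 q^k` for `k ≥ 1` and `L(p_0²) = 4`. As `p_k` has degree `k`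
and leading coefficient `1` (`2` for `k = 0`), the Gram identity `V H Vᵀ = diag L(p_k²)` with `V`
lower triangular gives `4 det H = 4 ∏_{k=1}^n 2 q^k`.
-/

open Polynomial Finset
open scoped LaurentPolynomial Matrix
open LaurentPolynomial (T)

namespace HankelLegendre

variable {K : Type*} [CommRing K]

def hankel (a : ℕ → K) (n : ℕ) : Matrix (Fin (n + 1)) (Fin (n + 1)) K :=
  Matrix.of fun i j => a (i + j)

def coeffMatrix (p : ℕ → K[X]) (n : ℕ) : Matrix (Fin (n + 1)) (Fin (n + 1)) K :=
  Matrix.of fun k i => (p k).coeff i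

theorem apply_mul_eq_sum (L : K[X] →ₗ[K] K) {f g : K[X]} {N : ℕ} (hf : f.natDegree < N)
    (hg : g.natDegree < N) :
    L (f * g) = ∑ i ∈ range N, ∑ j ∈ range N, f.coeff i * g.coeff j * L (X ^ (i + j)) := by
  conv_lhs => rw [f.as_sum_range' N hf, g.as_sum_range' N hg, sum_mul_sum]
  simp only [map_sum, monomial_mul_monomial]
  simp only [← smul_X_eq_monomial, map_smul, smul_eq_mul]

theorem coeffMatrix_mul_hankel_mul_transpose (L : K[X] →ₗ[K] K) (p : ℕ → K[X]) (n : ℕ)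
    (hp : ∀ k ≤ n, (p k).natDegree ≤ n) :
    coeffMatrix p n * hankel (fun m => L (X ^ m)) n * (coeffMatrix p n)ᵀ =
      Matrix.of fun k l : Fin (n + 1) => L (p k * p l) := by
  ext k l
  rw [Matrix.of_apply, apply_mul_eq_sum L (Nat.lt_succ_of_le (hp k k.is_le))
    (Nat.lt_succ_of_le (hp l l.is_le)), sum_comm]
  simp only [Matrix.mul_apply, coeffMatrix, hankel, Matrix.of_apply, Matrix.transpose_apply,
    sum_mul, Finset.sum_range]
  exact sum_congr rfl fun j _ => sum_congr rfl fun i _ => by ring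

theorem prod_coeff_sq_mul_det_hankel (L : K[X] →ₗ[K] K) (p : ℕ → K[X]) (n : ℕ)
    (hdeg : ∀ k ≤ n, (p k).natDegree ≤ k)
    (horth : ∀ k ≤ n, ∀ l ≤ n, k ≠ l → L (p k * p l) = 0) :
    (∏ k ∈ range (n + 1), (p k).coeff k) ^ 2 * (hankel (fun m => L (X ^ m)) n).det =
      ∏ k ∈ range (n + 1), L (p k * p k) := by
  have hgram := congrArg Matrix.det (coeffMatrix_mul_hankel_mul_transpose L p n
    fun k hk => (hdeg k hk).trans hk)
  have hdiag : (Matrix.of fun k l : Fin (n + 1) => L (p k * p l)) =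
      Matrix.diagonal fun k : Fin (n + 1) => L (p k * p k) := by
    ext k l
    by_cases hkl : k = l
    · simp [hkl]
    · simp [hkl, horth k k.is_le l l.is_le (Fin.val_ne_of_ne hkl)]
  have htri : (coeffMatrix p n).IsLowerTriangular := fun k i hki =>
    coeff_eq_zero_of_natDegree_lt ((hdeg k k.is_le).trans_lt hki)
  rw [hdiag, Matrix.det_diagonal, Matrix.det_mul, Matrix.det_mul, Matrix.det_transpose,
    Matrix.det_of_isLowerTriangular _ htri] at hgram
  simp only [coeffMatrix, Matrix.of_apply, Finset.prod_range] at hgram ⊢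
  rw [← hgram]
  ring

theorem dickson_one_zero (a : K) : dickson 1 a 0 = 2 := by
  rw [dickson_zero]; norm_num

theorem aeval_dickson_one_add {A : Type*} [CommRing A] [Algebra K A] (a : K) {x y : A}
    (h : x * y = algebraMap K A a) : ∀ n, aeval (x + y) (dickson 1 a n) = x ^ n + y ^ n
  | 0 => by rw [dickson_one_zero, map_ofNat]; norm_num
  | 1 => by simp
  | n + 2 => by
    simp only [dickson_add_two, map_sub, map_mul, aeval_X, aeval_C, ← h,
      aeval_dickson_one_add a h n, aeval_dickson_one_add a h (n + 1)]
    ring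

theorem natDegree_dickson_le (k : ℕ) (a : K) : ∀ n, (dickson k a n).natDegree ≤ n
  | 0 => by
    rw [dickson_zero, show (3 - k : K[X]) = C (3 - k : K) by simp [← C_ofNat]]
    exact (natDegree_C _).le
  | 1 => by simpa using natDegree_X_le
  | n + 2 => by
    rw [dickson_add_two]
    refine (natDegree_sub_le _ _).trans (max_le ?_ ?_)
    · exact natDegree_mul_le.trans
        (by linarith [natDegree_X_le (R := K), natDegree_dickson_le k a (n + 1)])
    · exact (natDegree_C_mul_le _ _).trans ((natDegree_dickson_le k a n).trans (by omega))

theorem coeff_dickson_succ_self (k : ℕ) (a : K) :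
    ∀ n, (dickson k a (n + 1)).coeff (n + 1) = 1
  | 0 => by simp
  | n + 1 => by
    rw [dickson_add_two, coeff_sub, coeff_X_mul, coeff_dickson_succ_self k a n, coeff_C_mul,
      coeff_eq_zero_of_natDegree_lt ((natDegree_dickson_le k a n).trans_lt (by omega))]
    ring

theorem coeff_taylor_of_natDegree_le {f : K[X]} {k : ℕ} (h : f.natDegree ≤ k) (r : K) :
    (taylor r f).coeff k = f.coeff k := by
  rcases h.lt_or_eq with h | rfl
  · rw [coeff_eq_zero_of_natDegree_lt h,
      coeff_eq_zero_of_natDegree_lt (by rwa [natDegree_taylor])]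
  · exact coeff_taylor_natDegree r f

noncomputable def joukowski (r q : K) : K[T;T⁻¹] :=
  T 1 + LaurentPolynomial.C r + LaurentPolynomial.C q * T (-1)

noncomputable def coeffZeroAeval (z : K[T;T⁻¹]) : K[X] →ₗ[K] K where
  toFun f := (aeval z f).coeff 0
  map_add' f g := by simp
  map_smul' c f := by simp

theorem coeff_toLaurent_natCast (f : K[X]) (n : ℕ) :
    (toLaurent f).coeff (n : ℤ) = f.coeff n := by
  rw [LaurentPolynomial.coeff_toLaurent]
  exact Finsupp.mapDomain_apply Nat.castEmbedding.injective _ n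

theorem coeff_zero_toLaurent_mul_T_neg (f : K[X]) (n : ℕ) :
    (toLaurent f * T (-n)).coeff 0 = f.coeff n := by
  rw [LaurentPolynomial.T, AddMonoidAlgebra.coeff_mul_single_apply, zero_add, neg_neg, mul_one,
    coeff_toLaurent_natCast]

theorem toLaurent_mul_T_neg_one (a y : K) : toLaurent ((X + C a) * (X + C y)) * T (-1) =
    T 1 + LaurentPolynomial.C (a + y) + LaurentPolynomial.C (a * y) * T (-1) := by
  have h : (T 1 * T (-1) : K[T;T⁻¹]) = 1 := by rw [← LaurentPolynomial.T_add]; simp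
  simp only [map_mul, map_add, toLaurent_X, toLaurent_C]
  linear_combination (T 1 + LaurentPolynomial.C a + LaurentPolynomial.C y) * h

theorem coeffZeroAeval_joukowski_X_pow (a y : K) (m : ℕ) :
    coeffZeroAeval (joukowski (a + y) (a * y)) (X ^ m) =
      ∑ k ∈ range (m + 1), (m.choose k : K) ^ 2 * a ^ (m - k) * y ^ k := by
  rw [coeffZeroAeval, LinearMap.coe_mk, AddHom.coe_mk, map_pow, aeval_X, joukowski,
    ← toLaurent_mul_T_neg_one, mul_pow, LaurentPolynomial.T_pow, ← map_pow, mul_neg_one,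
    coeff_zero_toLaurent_mul_T_neg, mul_pow, coeff_mul,
    Finset.Nat.sum_antidiagonal_eq_sum_range_succ_mk]
  refine Finset.sum_congr rfl fun k hk => ?_
  have hkm : k ≤ m := Nat.le_of_lt_succ (Finset.mem_range.mp hk)
  rw [coeff_X_add_C_pow, coeff_X_add_C_pow, Nat.choose_symm hkm, Nat.sub_sub_self hkm]
  ring

theorem aeval_joukowski_taylor_dickson (r q : K) (k : ℕ) :
    aeval (joukowski r q) (taylor (-r) (dickson 1 q k)) =
      T k + LaurentPolynomial.C (q ^ k) * T (-k) := by
  have hxy : T 1 * (LaurentPolynomial.C q * T (-1)) = algebraMap K K[T;T⁻¹] q := by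
    rw [mul_left_comm, ← LaurentPolynomial.T_add, add_neg_cancel, LaurentPolynomial.T_zero,
      mul_one, LaurentPolynomial.C_eq_algebraMap]
  have hshift : aeval (joukowski r q) (X + C (-r)) = T 1 + LaurentPolynomial.C q * T (-1) := by
    rw [joukowski, map_add, aeval_X, aeval_C, ← LaurentPolynomial.C_eq_algebraMap, map_neg]
    ring
  rw [taylor_apply, aeval_comp, hshift, aeval_dickson_one_add q hxy, mul_pow,
    LaurentPolynomial.T_pow, LaurentPolynomial.T_pow, ← map_pow]
  simp

theorem coeff_zero_T_add_C_pow_mul_T_neg_mul (q : K) (k l : ℕ) :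
    ((T k + LaurentPolynomial.C (q ^ k) * T (-k)) *
      (T l + LaurentPolynomial.C (q ^ l) * T (-l))).coeff 0 =
      if k = l then if k = 0 then 4 else 2 * q ^ k else 0 := by
  rw [← LaurentPolynomial.single_eq_C_mul_T, ← LaurentPolynomial.single_eq_C_mul_T]
  simp only [LaurentPolynomial.T, mul_add, add_mul, AddMonoidAlgebra.single_mul_single,
    AddMonoidAlgebra.coeff_add, AddMonoidAlgebra.coeff_single]
  simp only [Finsupp.add_apply, Finsupp.single_apply]
  split_ifs <;> first | omega | (subst_vars; ring)

theorem coeffZeroAeval_joukowski_taylor_dickson_mul (r q : K) (k l : ℕ) :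
    coeffZeroAeval (joukowski r q) (taylor (-r) (dickson 1 q k) * taylor (-r) (dickson 1 q l)) =
      if k = l then if k = 0 then 4 else 2 * q ^ k else 0 := by
  rw [coeffZeroAeval, LinearMap.coe_mk, AddHom.coe_mk, map_mul, aeval_joukowski_taylor_dickson,
    aeval_joukowski_taylor_dickson, coeff_zero_T_add_C_pow_mul_T_neg_mul]

theorem prod_range_two_mul_pow_succ (q : K) (n : ℕ) :
    ∏ k ∈ range n, 2 * q ^ (k + 1) = 2 ^ n * q ^ (n * (n + 1) / 2) := by
  have hgauss : ∑ k ∈ range n, (k + 1) = n * (n + 1) / 2 := by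
    rw [← add_zero (∑ k ∈ range n, (k + 1)), ← sum_range_succ' (fun k => k), sum_range_id,
      Nat.add_sub_cancel, mul_comm]
  rw [prod_mul_distrib, prod_const, card_range, prod_pow_eq_pow_sum, hgauss]

theorem prod_coeffZeroAeval_joukowski_taylor_dickson_sq (r q : K) (n : ℕ) :
    ∏ k ∈ range (n + 1),
        coeffZeroAeval (joukowski r q) (taylor (-r) (dickson 1 q k) * taylor (-r) (dickson 1 q k)) =
      4 * (2 ^ n * q ^ (n * (n + 1) / 2)) := by
  simp only [coeffZeroAeval_joukowski_taylor_dickson_mul, if_true, prod_range_succ',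
    Nat.succ_ne_zero, if_false, prod_range_two_mul_pow_succ]
  ring

theorem prod_coeff_taylor_dickson (r q : K) (n : ℕ) :
    ∏ k ∈ range (n + 1), (taylor (-r) (dickson 1 q k)).coeff k = 2 := by
  simp only [prod_range_succ', coeff_taylor_of_natDegree_le (natDegree_dickson_le 1 q _),
    coeff_dickson_succ_self, dickson_one_zero, prod_const_one, one_mul]
  norm_num

theorem legendre_eq_coeffZeroAeval {F : Type*} [Field F] [NeZero (2 : F)] (r : F) (m : ℕ) :
    ∑ k ∈ range (m + 1),
        (-1 : F) ^ k * (m.choose k : F) ^ 2 * ((1 + r) / 2) ^ (m - k) * ((1 - r) / 2) ^ k =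
      coeffZeroAeval (joukowski r ((r ^ 2 - 1) / 4)) (X ^ m) := by
  have h4 : (4 : F) = 2 * 2 := by norm_num
  have hz : joukowski r ((r ^ 2 - 1) / 4) = joukowski ((1 + r) / 2 + (r - 1) / 2)
      ((1 + r) / 2 * ((r - 1) / 2)) := by
    congr 1
    · field_simp; ring
    · rw [h4]; field_simp; ring
  rw [hz, coeffZeroAeval_joukowski_X_pow]
  refine sum_congr rfl fun k _ => ?_
  rw [show (r - 1) / 2 = -1 * ((1 - r) / 2) by ring, mul_pow]
  ring

end HankelLegendre

open HankelLegendre in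
/-- The Hankel transform of the sequence of Legendre polynomial values `Pₘ(r)` is
`hₙ = (r²−1)^(n(n+1)/2) / 2^(n²)`. -/
theorem hankel_legendre (r : ℝ) (n : ℕ) (P : ℕ → ℝ)
    (hP : ∀ m, P m = ∑ k ∈ Finset.range (m + 1),
      (-1 : ℝ) ^ k * ((m.choose k : ℝ)) ^ 2 * ((1 + r) / 2) ^ (m - k) * ((1 - r) / 2) ^ k) :
    Matrix.det (Matrix.of fun i j : Fin (n + 1) => P ((i : ℕ) + (j : ℕ))) =
      (r ^ 2 - 1) ^ (n * (n + 1) / 2) / 2 ^ (n ^ 2) := by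
  set q : ℝ := (r ^ 2 - 1) / 4
  have hH : (Matrix.of fun i j : Fin (n + 1) => P ((i : ℕ) + (j : ℕ))) =
      hankel (fun m => coeffZeroAeval (joukowski r q) (X ^ m)) n := by
    ext i j
    rw [hankel, Matrix.of_apply, Matrix.of_apply, hP, legendre_eq_coeffZeroAeval]
  have hgram := prod_coeff_sq_mul_det_hankel (coeffZeroAeval (joukowski r q))
    (fun k => taylor (-r) (dickson 1 q k)) n
    (fun k _ => (natDegree_taylor _ _).trans_le (natDegree_dickson_le 1 q k))
    (fun k _ l _ hkl => by rw [coeffZeroAeval_joukowski_taylor_dickson_mul, if_neg hkl])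
  rw [prod_coeff_taylor_dickson, prod_coeffZeroAeval_joukowski_taylor_dickson_sq] at hgram
  have h4 : (4 : ℝ) ^ (n * (n + 1) / 2) = 2 ^ n ^ 2 * 2 ^ n := by
    rw [show (4 : ℝ) = 2 ^ 2 by norm_num, ← pow_mul, ← pow_add,
      Nat.two_mul_div_two_of_even (Nat.even_mul_succ_self n)]
    ring
  rw [hH, show (hankel _ n).det = 2 ^ n * q ^ (n * (n + 1) / 2) by linarith, div_pow, h4]
  field_simp
end

section
/- Let r ∈ ℝ with r > 1 and let n ∈ ℕ. Then the Legendre polynomial value P_n(r) = ∑_{k=0}^{n} (−1)ᵏ·C(n,k)²·((1+r)/2)^{n−k}·((1−r)/2)ᵏ has the moment representation P_n(r) = (1/π)·∫_{r−√(r²−1)}^{r+√(r²−1)} xⁿ/√(−x² + 2rx − 1) dx. -/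
open Real MeasureTheory intervalIntegral Finset Complex in

lemma cosIntInt (m : ℤ) : ∫ θ in (0:ℝ)..π, Real.cos (m * θ) = if m = 0 then π else 0 := by
  rcases eq_or_ne m 0 with h | h
  · simp [h]
  · rw [if_neg h]
    have hm : (m : ℝ) ≠ 0 := Int.cast_ne_zero.mpr h
    have := intervalIntegral.integral_comp_mul_left (a := (0:ℝ)) (b := π) (fun x => Real.cos x) hm
    simp only [integral_cos] at this
    rw [this]
    simp [Real.sin_int_mul_pi]

open Real MeasureTheory intervalIntegral Finset Complex in
lemma pointwise (n : ℕ) (p q θ : ℝ) :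
    (p^2 + q^2 + 2*p*q*Real.cos θ)^n =
      ∑ j ∈ range (n+1), ∑ k ∈ range (n+1),
        ((n.choose j : ℝ) * p^(n-j) * q^j * ((n.choose k : ℝ) * p^(n-k) * q^k)) *
          Real.cos (((j:ℝ) - k) * θ) := by
  set z : ℂ := (p:ℂ) + q * Complex.exp (θ * I) with hzdef
  have hconj : (starRingEnd ℂ) z = (p:ℂ) + q * Complex.exp (-(θ * I)) := by
    simp [hzdef, map_add, map_mul, Complex.conj_ofReal, ← Complex.exp_conj, map_mul,
      Complex.conj_I, mul_neg]
  have h1 : Complex.exp (θ * I) * Complex.exp (-(θ * I)) = 1 := by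
    rw [← Complex.exp_add]; simp
  have hmul : z * (starRingEnd ℂ) z = ((p^2 + q^2 + 2*p*q*Real.cos θ : ℝ) : ℂ) := by
    rw [hconj, hzdef]
    have h2 : Complex.exp (θ * I) + Complex.exp (-(θ * I)) = 2 * Complex.cos θ := by
      rw [Complex.exp_mul_I, ← neg_mul, Complex.exp_mul_I, Complex.cos_neg, Complex.sin_neg]
      ring
    push_cast
    linear_combination (p:ℂ) * (q:ℂ) * h2 + (q:ℂ)^2 * h1
  -- expansions of z^n and (conj z)^n
  have hzn : z^n = ∑ k ∈ range (n+1),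
      ((n.choose k : ℂ) * (p:ℂ)^(n-k) * (q:ℂ)^k) * Complex.exp (k * (θ * I)) := by
    rw [hzdef, add_comm, add_pow]
    refine Finset.sum_congr rfl fun k hk => ?_
    rw [mul_pow, Complex.exp_nat_mul]
    ring
  have hcn : ((starRingEnd ℂ) z)^n = ∑ k ∈ range (n+1),
      ((n.choose k : ℂ) * (p:ℂ)^(n-k) * (q:ℂ)^k) * Complex.exp (-(k * (θ * I))) := by
    rw [hconj, add_comm, add_pow]
    refine Finset.sum_congr rfl fun k hk => ?_
    rw [mul_pow, ← Complex.exp_nat_mul]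
    ring_nf
  have key : ((p^2 + q^2 + 2*p*q*Real.cos θ : ℝ) : ℂ)^n =
      ∑ j ∈ range (n+1), ∑ k ∈ range (n+1),
        (((n.choose j : ℝ) * p^(n-j) * q^j * ((n.choose k : ℝ) * p^(n-k) * q^k) : ℝ) : ℂ) *
          Complex.exp ((((j:ℝ) - k) * θ : ℝ) * I) := by
    rw [← hmul, mul_pow, hzn, hcn, Finset.sum_mul_sum]
    refine Finset.sum_congr rfl fun j hj => Finset.sum_congr rfl fun k hk => ?_
    rw [mul_mul_mul_comm, ← Complex.exp_add]
    push_cast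
    ring_nf
  have hterm : ∀ (c x : ℝ), (((c:ℝ):ℂ) * Complex.exp ((x:ℝ) * I)).re = c * Real.cos x := by
    intro c x
    rw [Complex.re_ofReal_mul, Complex.exp_mul_I]
    simp [Complex.cos_ofReal_re]
  have := congrArg Complex.re key
  rw [← Complex.ofReal_pow, Complex.ofReal_re, Complex.re_sum] at this
  rw [this]
  refine Finset.sum_congr rfl fun j hj => ?_
  rw [Complex.re_sum]
  exact Finset.sum_congr rfl fun k hk => hterm _ _

open Real MeasureTheory intervalIntegral Finset Complex in
lemma trigIntegral (n : ℕ) (p q : ℝ) :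
    ∫ θ in (0:ℝ)..π, (p^2 + q^2 + 2*p*q*Real.cos θ)^n =
      π * ∑ k ∈ range (n+1), (n.choose k : ℝ)^2 * (p^2)^(n-k) * (q^2)^k := by
  have hcont : ∀ (a c : ℝ), IntervalIntegrable (fun θ => a * Real.cos (c * θ))
      volume 0 π := by
    intro a c
    exact (continuous_const.mul (Real.continuous_cos.comp
      (continuous_const.mul continuous_id))).intervalIntegrable _ _
  simp only [pointwise n p q]
  rw [intervalIntegral.integral_finset_sum]
  swap
  · intro j hj
    exact ((continuous_finset_sum _ (fun k _ => continuous_const.mul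
      (Real.continuous_cos.comp (continuous_const.mul continuous_id)))).intervalIntegrable _ _)
  have hj' : ∀ j ∈ range (n+1),
      (∫ θ in (0:ℝ)..π, ∑ k ∈ range (n+1),
        ((n.choose j : ℝ) * p^(n-j) * q^j * ((n.choose k : ℝ) * p^(n-k) * q^k)) *
          Real.cos (((j:ℝ) - k) * θ)) =
      ((n.choose j : ℝ) * p^(n-j) * q^j)^2 * π := by
    intro j hj
    rw [intervalIntegral.integral_finset_sum (fun k hk => hcont _ _)]
    have hk' : ∀ k ∈ range (n+1),
        (∫ θ in (0:ℝ)..π,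
          ((n.choose j : ℝ) * p^(n-j) * q^j * ((n.choose k : ℝ) * p^(n-k) * q^k)) *
            Real.cos (((j:ℝ) - k) * θ)) =
        ((n.choose j : ℝ) * p^(n-j) * q^j * ((n.choose k : ℝ) * p^(n-k) * q^k)) *
          (if ((j:ℤ) - k) = 0 then π else 0) := by
      intro k hk
      rw [intervalIntegral.integral_const_mul]
      congr 1
      have : ((j:ℝ) - k) = (((j:ℤ) - k : ℤ) : ℝ) := by push_cast; ring
      rw [this, cosIntInt]
    rw [Finset.sum_congr rfl hk', Finset.sum_eq_single j]
    · rw [if_pos (by omega)]; ring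
    · intro k hk hkj
      rw [if_neg (by omega), mul_zero]
    · intro h; exact absurd hj h
  rw [Finset.sum_congr rfl hj', Finset.mul_sum]
  refine Finset.sum_congr rfl fun j hj => ?_
  rw [mul_pow, mul_pow, pow_right_comm, pow_right_comm (q) _ 2]
  ring

open Real MeasureTheory intervalIntegral Finset Set in
/-- Moment representation of the Legendre polynomials: for `r > 1`,
`Pₙ(r) = (1/π)·∫ xⁿ/√(−x²+2rx−1) dx` over the interval where the quadratic is
positive. -/
theorem legendre_moment_integral (r : ℝ) (hr : 1 < r) (n : ℕ) :
    ∑ k ∈ Finset.range (n + 1),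
      (-1 : ℝ) ^ k * ((n.choose k : ℝ)) ^ 2 * ((1 + r) / 2) ^ (n - k) * ((1 - r) / 2) ^ k =
    (1 / Real.pi) *
      ∫ x in (r - Real.sqrt (r ^ 2 - 1))..(r + Real.sqrt (r ^ 2 - 1)),
        x ^ n / Real.sqrt (-x ^ 2 + 2 * r * x - 1) := by
  set s₀ := Real.sqrt (r ^ 2 - 1) with hs₀def
  have hr2 : (0:ℝ) < r ^ 2 - 1 := by nlinarith
  have hs₀pos : 0 < s₀ := Real.sqrt_pos.mpr hr2
  have hs2 : s₀ ^ 2 = r ^ 2 - 1 := Real.sq_sqrt hr2.le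
  set f : ℝ → ℝ := fun θ => r - s₀ * Real.cos θ with hfdef
  -- monotonicity and injectivity
  have hmono : StrictMonoOn f (Set.Icc 0 π) := by
    intro a ha b hb hab
    have := Real.strictAntiOn_cos ha hb hab
    simp only [hfdef]
    nlinarith
  have hinj : Set.InjOn f (Set.Ioo 0 π) :=
    (hmono.mono Set.Ioo_subset_Icc_self).injOn
  -- image
  have hf0 : f 0 = r - s₀ := by simp [hfdef]
  have hfπ : f π = r + s₀ := by simp [hfdef]
  have himg : f '' Set.Ioo 0 π = Set.Ioo (r - s₀) (r + s₀) := by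
    apply Set.Subset.antisymm
    · rintro x ⟨θ, hθ, rfl⟩
      have h1 : Real.cos θ < Real.cos 0 :=
        Real.strictAntiOn_cos (Set.left_mem_Icc.mpr Real.pi_pos.le)
          ⟨hθ.1.le, hθ.2.le⟩ hθ.1
      have h2 : Real.cos π < Real.cos θ :=
        Real.strictAntiOn_cos ⟨hθ.1.le, hθ.2.le⟩
          (Set.right_mem_Icc.mpr Real.pi_pos.le) hθ.2
      rw [Real.cos_zero] at h1
      rw [Real.cos_pi] at h2
      constructor <;> simp only [hfdef] <;> nlinarith
    · have := intermediate_value_Ioo Real.pi_pos.le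
        (Continuous.continuousOn (by fun_prop) : ContinuousOn f (Set.Icc 0 π))
      rw [hf0, hfπ] at this
      exact this
  -- derivative
  have hderiv : ∀ θ ∈ Set.Ioo (0:ℝ) π,
      HasDerivWithinAt f (s₀ * Real.sin θ) (Set.Ioo 0 π) θ := by
    intro θ _
    have : HasDerivAt f (s₀ * Real.sin θ) θ := by
      simpa [hfdef, mul_comm] using ((Real.hasDerivAt_cos θ).const_mul s₀).const_sub r
    exact this.hasDerivWithinAt
  -- change of variables
  have hcv := integral_image_eq_integral_abs_deriv_smul measurableSet_Ioo hderiv hinj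
    (fun x => x ^ n / Real.sqrt (-x ^ 2 + 2 * r * x - 1))
  rw [himg] at hcv
  -- simplify the substituted integrand on Ioo 0 π
  have hpt : ∀ θ ∈ Set.Ioo (0:ℝ) π,
      |s₀ * Real.sin θ| • ((f θ) ^ n / Real.sqrt (-(f θ) ^ 2 + 2 * r * (f θ) - 1)) =
        (r - s₀ * Real.cos θ) ^ n := by
    intro θ hθ
    have hsin : 0 < Real.sin θ := Real.sin_pos_of_pos_of_lt_pi hθ.1 hθ.2
    have hQ : -(f θ) ^ 2 + 2 * r * (f θ) - 1 = (s₀ * Real.sin θ) ^ 2 := by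
      simp only [hfdef]
      linear_combination (-1 : ℝ) * hs2 + (-(s₀^2)) * Real.sin_sq_add_cos_sq θ
    have hpos : 0 < s₀ * Real.sin θ := mul_pos hs₀pos hsin
    rw [hQ, Real.sqrt_sq hpos.le, abs_of_pos hpos, smul_eq_mul, hfdef]
    field_simp
  have heq : ∫ θ in Set.Ioo (0:ℝ) π,
      |s₀ * Real.sin θ| • ((f θ) ^ n / Real.sqrt (-(f θ) ^ 2 + 2 * r * (f θ) - 1)) =
      ∫ θ in Set.Ioo (0:ℝ) π, (r - s₀ * Real.cos θ) ^ n :=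
    setIntegral_congr_fun measurableSet_Ioo hpt
  -- now convert everything to interval integrals
  have hIoo1 : (∫ x in (r - s₀)..(r + s₀),
      x ^ n / Real.sqrt (-x ^ 2 + 2 * r * x - 1)) =
      ∫ x in Set.Ioo (r - s₀) (r + s₀), x ^ n / Real.sqrt (-x ^ 2 + 2 * r * x - 1) := by
    rw [intervalIntegral.integral_of_le (by linarith), integral_Ioc_eq_integral_Ioo]
  have hIoo2 : (∫ θ in Set.Ioo (0:ℝ) π, (r - s₀ * Real.cos θ) ^ n) =
      ∫ θ in (0:ℝ)..π, (r - s₀ * Real.cos θ) ^ n := by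
    rw [intervalIntegral.integral_of_le Real.pi_pos.le, integral_Ioc_eq_integral_Ioo]
  -- Laplace integral via trigIntegral with p = √((r+1)/2), q = -√((r-1)/2)
  set p := Real.sqrt ((r + 1) / 2) with hpdef
  set q := -Real.sqrt ((r - 1) / 2) with hqdef
  have hp2 : p ^ 2 = (r + 1) / 2 := Real.sq_sqrt (by linarith)
  have hq2 : q ^ 2 = (r - 1) / 2 := by
    rw [hqdef, neg_sq]; exact Real.sq_sqrt (by linarith)
  have h2pq : 2 * p * q = -s₀ := by
    have h1 : p * (-q) = Real.sqrt (((r + 1) / 2) * ((r - 1) / 2)) := by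
      rw [hpdef, hqdef, neg_neg, ← Real.sqrt_mul (by linarith)]
    have h2 : ((r + 1) / 2) * ((r - 1) / 2) = (s₀ / 2) ^ 2 := by
      rw [div_pow, hs2]; ring
    have h3 : Real.sqrt ((s₀ / 2) ^ 2) = s₀ / 2 := Real.sqrt_sq (by linarith)
    rw [h2, h3] at h1
    linear_combination (-2 : ℝ) * h1
  have htrig : ∀ θ : ℝ, p ^ 2 + q ^ 2 + 2 * p * q * Real.cos θ = r - s₀ * Real.cos θ := by
    intro θ
    rw [hp2, hq2, h2pq]; ring
  have hlap : (∫ θ in (0:ℝ)..π, (r - s₀ * Real.cos θ) ^ n) =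
      π * ∑ k ∈ range (n+1), (n.choose k : ℝ)^2 * ((r+1)/2)^(n-k) * ((r-1)/2)^k := by
    rw [show (fun θ => (r - s₀ * Real.cos θ) ^ n) = fun θ =>
      (p ^ 2 + q ^ 2 + 2 * p * q * Real.cos θ) ^ n from funext fun θ => by rw [htrig]]
    rw [trigIntegral n p q, hp2, hq2]
  -- put it all together
  rw [hIoo1, hcv, heq, hIoo2, hlap, ← mul_assoc, one_div, inv_mul_cancel₀ Real.pi_ne_zero,
    one_mul]
  refine Finset.sum_congr rfl fun k hk => ?_
  have hneg : ((r - 1) / 2 : ℝ) ^ k = (-1 : ℝ) ^ k * ((1 - r) / 2) ^ k := by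
    rw [← mul_pow]
    congr 1
    ring
  rw [hneg, show ((r + 1) / 2 : ℝ) = (1 + r) / 2 from by ring]
  ring
end

section
/- Let r ∈ ℝ and n ∈ ℕ. Let He_m denote the m-th probabilists' Hermite polynomial. Then the determinant of the (n+1)×(n+1) Hankel matrix whose (i,j) entry is He_{i+j}(r) for 0 ≤ i,j ≤ n equals (−1)^{n(n+1)/2}·∏_{k=0}^{n} k!. In particular this Hankel determinant does not depend on r. -/
open Polynomial Finset Matrix

noncomputable def fh (r : ℝ) (m : ℕ) : ℝ := Polynomial.aeval r (Polynomial.hermite m)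

lemma derivative_hermite (m : ℕ) :
    derivative (hermite m) = (m : ℤ[X]) * hermite (m - 1) := by
  induction m using Nat.strong_induction_on with
  | _ m ih =>
    match m with
    | 0 => simp [hermite_zero]
    | 1 => simp [hermite_one, hermite_zero]
    | (p+2) =>
      have h : X * hermite p - derivative (hermite p) = hermite (p+1) := (hermite_succ p).symm
      rw [hermite_succ (p+1), derivative_sub, derivative_mul, derivative_X, one_mul,
        ih (p+1) (by omega)]
      simp only [Nat.add_sub_cancel, derivative_mul, derivative_natCast, zero_mul, zero_add]
      push_cast
      linear_combination ((p : ℤ[X]) + 1) * h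

lemma fh_zero (r : ℝ) : fh r 0 = 1 := by simp [fh, hermite_zero]

lemma fh_rec (r : ℝ) (m : ℕ) : fh r (m + 1) = r * fh r m - (m : ℝ) * fh r (m - 1) := by
  simp only [fh, hermite_succ, map_sub, _root_.map_mul, aeval_X, derivative_hermite, map_natCast]

noncomputable def th (r : ℝ) (i j k : ℕ) : ℝ :=
  (-1)^k * (k.factorial : ℝ) * (i.choose k) * (j.choose k) * fh r (i-k) * fh r (j-k)

noncomputable def vh (r : ℝ) (i j k : ℕ) : ℝ :=
  (-1)^(k+1) * ((k+1).factorial : ℝ) *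
    ((i.choose k) * (j.choose (k+1)) * fh r (i-k) * fh r (j-(k+1))
     - (i.choose (k+1)) * (j.choose k) * fh r (i-(k+1)) * fh r (j-k))

lemma lemB2 (r : ℝ) (i j k : ℕ) :
    (-1)^(k+1) * ((k+1).factorial : ℝ) * (i.choose (k+1)) * (j.choose (k+1)) *
      (fh r (i-k) * fh r (j-(k+1)) - fh r (i-(k+1)) * fh r (j-k))
    = - vh r i j (k+1) := by
  rcases lt_or_ge i (k+1) with hi | hi
  · have h1 : i.choose (k+1) = 0 := Nat.choose_eq_zero_of_lt hi
    have h2 : i.choose (k+2) = 0 := Nat.choose_eq_zero_of_lt (by omega)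
    simp [vh, h1, h2]
  rcases lt_or_ge j (k+1) with hj | hj
  · have h1 : j.choose (k+1) = 0 := Nat.choose_eq_zero_of_lt hj
    have h2 : j.choose (k+2) = 0 := Nat.choose_eq_zero_of_lt (by omega)
    simp [vh, h1, h2]
  have hik : i - k = (i - (k+1)) + 1 := by omega
  have hjk : j - k = (j - (k+1)) + 1 := by omega
  have hik2 : i - (k+1) - 1 = i - (k+2) := by omega
  have hjk2 : j - (k+1) - 1 = j - (k+2) := by omega
  have ei : fh r (i-k) = r * fh r (i-(k+1)) - ((i-(k+1) : ℕ) : ℝ) * fh r (i-(k+2)) := by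
    rw [hik, fh_rec, hik2]
  have ej : fh r (j-k) = r * fh r (j-(k+1)) - ((j-(k+1) : ℕ) : ℝ) * fh r (j-(k+2)) := by
    rw [hjk, fh_rec, hjk2]
  have ci : (i.choose (k+2) : ℝ) * (k+2) = (i.choose (k+1)) * ((i-(k+1) : ℕ) : ℝ) := by
    exact_mod_cast congrArg (Nat.cast (R := ℝ)) (Nat.choose_succ_right_eq i (k+1))
  have cj : (j.choose (k+2) : ℝ) * (k+2) = (j.choose (k+1)) * ((j-(k+1) : ℕ) : ℝ) := by
    exact_mod_cast congrArg (Nat.cast (R := ℝ)) (Nat.choose_succ_right_eq j (k+1))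
  rw [ei, ej]
  simp only [vh]
  have hf : ((k+1+1).factorial : ℝ) = (k+2) * ((k+1).factorial : ℝ) := by
    push_cast [Nat.factorial_succ]; ring
  rw [hf]
  have e2 : k+1+1 = k+2 := by omega
  simp only [e2]
  linear_combination ((-1:ℝ)^(k+1) * ((k+1).factorial:ℝ) * (j.choose (k+1):ℝ) * fh r (i-(k+2)) * fh r (j-(k+1))) * ci - ((-1:ℝ)^(k+1) * ((k+1).factorial:ℝ) * (i.choose (k+1):ℝ) * fh r (i-(k+1)) * fh r (j-(k+2))) * cj

lemma stepB (r : ℝ) (i j k : ℕ) :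
    th r (i+1) j (k+1) - th r i (j+1) (k+1) = vh r i j k - vh r i j (k+1) := by
  have hB1 : th r (i+1) j (k+1) - th r i (j+1) (k+1) - vh r i j k
      = (-1)^(k+1) * ((k+1).factorial : ℝ) * (i.choose (k+1)) * (j.choose (k+1)) *
        (fh r (i-k) * fh r (j-(k+1)) - fh r (i-(k+1)) * fh r (j-k)) := by
    simp only [th, vh, Nat.choose_succ_succ, Nat.succ_sub_succ]
    push_cast
    ring
  have := lemB2 r i j k
  linarith [hB1, this]

lemma lemD0 (r : ℝ) (i j : ℕ) :
    th r (i+1) j 0 - th r i (j+1) 0 = - vh r i j 0 := by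
  simp only [th, vh, zero_add, Nat.choose_zero_right, Nat.choose_one_right, Nat.sub_zero,
    Nat.factorial]
  rw [fh_rec r i, fh_rec r j]
  push_cast
  ring

lemma th_eq_zero_left (r : ℝ) {i k : ℕ} (h : i < k) (j : ℕ) : th r i j k = 0 := by
  simp [th, Nat.choose_eq_zero_of_lt h]

lemma th_eq_zero_right (r : ℝ) {j k : ℕ} (h : j < k) (i : ℕ) : th r i j k = 0 := by
  simp [th, Nat.choose_eq_zero_of_lt h]

lemma shift (r : ℝ) (i j : ℕ) :
    ∑ k ∈ range (j+2), th r i (j+1) k = ∑ k ∈ range (j+1), th r (i+1) j k := by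
  have h1 : ∑ k ∈ range (j+2), th r i (j+1) k = ∑ k ∈ range (i+j+2), th r i (j+1) k := by
    apply sum_subset (range_subset_range.2 (by omega))
    intro k _ hk
    exact th_eq_zero_right r (by simp at hk; omega) i
  have h2 : ∑ k ∈ range (j+1), th r (i+1) j k = ∑ k ∈ range (i+j+2), th r (i+1) j k := by
    apply sum_subset (range_subset_range.2 (by omega))
    intro k _ hk
    exact th_eq_zero_right r (by simp at hk; omega) (i+1)
  rw [h1, h2]
  have key : ∑ k ∈ range (i+j+2), (th r (i+1) j k - th r i (j+1) k) = 0 := by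
    rw [Finset.sum_range_succ']
    have tele : ∑ k ∈ range (i+j+1), (th r (i+1) j (k+1) - th r i (j+1) (k+1))
        = vh r i j 0 - vh r i j (i+j+1) := by
      calc ∑ k ∈ range (i+j+1), (th r (i+1) j (k+1) - th r i (j+1) (k+1))
          = ∑ k ∈ range (i+j+1), (vh r i j k - vh r i j (k+1)) := by
            exact Finset.sum_congr rfl fun k _ => stepB r i j k
        _ = vh r i j 0 - vh r i j (i+j+1) := Finset.sum_range_sub' _ _
    have hv : vh r i j (i+j+1) = 0 := by
      simp [vh, Nat.choose_eq_zero_of_lt (show i < i+j+1 by omega),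
        Nat.choose_eq_zero_of_lt (show i < i+j+1+1 by omega)]
    rw [tele, hv, lemD0]
    ring
  have := Finset.sum_sub_distrib (s := range (i+j+2)) (f := th r (i+1) j)
    (g := th r i (j+1))
  rw [this] at key
  linarith

lemma key_identity (r : ℝ) : ∀ j i : ℕ, fh r (i+j) = ∑ k ∈ range (j+1), th r i j k := by
  intro j
  induction j with
  | zero => intro i; simp [th, fh_zero]
  | succ j ih =>
    intro i
    have : i + (j+1) = (i+1) + j := by omega
    rw [this, ih (i+1), ← shift]

/-- The Hankel transform of the sequence of probabilists' Hermite polynomial values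
`Heₘ(r)` is `hₙ = (−1)^(n(n+1)/2)·∏_{k=0}^{n} k!`, independent of `r`. -/
theorem hankel_unitary_hermite (r : ℝ) (n : ℕ) :
    Matrix.det (Matrix.of fun i j : Fin (n + 1) =>
      (Polynomial.aeval r (Polynomial.hermite ((i : ℕ) + (j : ℕ))) : ℝ)) =
      (-1 : ℝ) ^ (n * (n + 1) / 2) * ∏ k ∈ Finset.range (n + 1), (k.factorial : ℝ) := by
  set B : Matrix (Fin (n+1)) (Fin (n+1)) ℝ :=
    Matrix.of fun i k : Fin (n+1) => ((i : ℕ).choose (k : ℕ) : ℝ) * fh r ((i : ℕ) - (k : ℕ))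
    with hB
  set D : Matrix (Fin (n+1)) (Fin (n+1)) ℝ :=
    Matrix.diagonal fun k : Fin (n+1) => (-1 : ℝ)^(k : ℕ) * ((k : ℕ).factorial : ℝ) with hD
  have hfact : (Matrix.of fun i j : Fin (n + 1) =>
      (Polynomial.aeval r (Polynomial.hermite ((i : ℕ) + (j : ℕ))) : ℝ)) = B * D * Bᵀ := by
    ext i j
    rw [Matrix.mul_apply]
    have : ∀ k : Fin (n+1), (B * D) i k * Bᵀ k j = th r (i : ℕ) (j : ℕ) (k : ℕ) := by
      intro k
      rw [Matrix.mul_diagonal]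
      simp only [hB, Matrix.transpose_apply, Matrix.of_apply, th]
      ring
    rw [Finset.sum_congr rfl (fun k _ => this k)]
    have hsum : ∑ k : Fin (n+1), th r (i : ℕ) (j : ℕ) (k : ℕ)
        = ∑ k ∈ range (n+1), th r (i : ℕ) (j : ℕ) k := Fin.sum_univ_eq_sum_range _ _
    rw [hsum]
    have hjn : (j : ℕ) + 1 ≤ n + 1 := j.isLt
    have hshrink : ∑ k ∈ range (n+1), th r (i : ℕ) (j : ℕ) k
        = ∑ k ∈ range ((j : ℕ)+1), th r (i : ℕ) (j : ℕ) k := by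
      symm
      apply sum_subset (range_subset_range.2 hjn)
      intro k _ hk
      exact th_eq_zero_right r (by simp at hk; omega) _
    rw [hshrink, ← key_identity r (j : ℕ) (i : ℕ)]
    rfl
  rw [hfact, Matrix.det_mul, Matrix.det_mul, Matrix.det_transpose]
  have hBtri : B.BlockTriangular OrderDual.toDual := by
    intro i j hij
    have : (i : ℕ) < (j : ℕ) := hij
    simp [hB, Nat.choose_eq_zero_of_lt this]
  have hdetB : B.det = 1 := by
    rw [Matrix.det_of_lowerTriangular B hBtri]
    have : ∀ i : Fin (n+1), B i i = 1 := by
      intro i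
      simp [hB, fh_zero]
    simp [this]
  have hdetD : D.det = (-1 : ℝ) ^ (n * (n + 1) / 2) * ∏ k ∈ range (n + 1), (k.factorial : ℝ) := by
    rw [hD, Matrix.det_diagonal]
    rw [Finset.prod_mul_distrib, Finset.prod_pow_eq_pow_sum]
    have h1 : ∑ k : Fin (n+1), (k : ℕ) = ∑ k ∈ range (n+1), k := by
      exact_mod_cast Fin.sum_univ_eq_sum_range (fun k => k) (n+1)
    have h2 : ∑ k ∈ range (n+1), k = n * (n+1) / 2 := by
      rw [Finset.sum_range_id, Nat.add_sub_cancel, Nat.mul_comm]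
    have h3 : ∏ k : Fin (n+1), ((k : ℕ).factorial : ℝ)
        = ∏ k ∈ range (n+1), (k.factorial : ℝ) :=
      Fin.prod_univ_eq_prod_range (fun k => (k.factorial : ℝ)) (n+1)
    rw [h1, h2, h3]
  rw [hdetB, hdetD]
  ring
end

section
/- Let r ∈ ℝ and n ∈ ℕ. Let H_m(r) = ∑_{k=0}^{⌊m/2⌋} (−1)ᵏ·(m!/(k!·(m−2k)!))·(2r)^{m−2k} denote the physicists' Hermite polynomials evaluated at r. Then the determinant of the (n+1)×(n+1) Hankel matrix whose (i,j) entry is H_{i+j}(r) for 0 ≤ i,j ≤ n equals (−1)^{n(n+1)/2}·∏_{k=0}^{n} 2ᵏ·k!. In particular this Hankel determinant does not depend on r. -/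
open Finset

private lemma natAux (n k : ℕ) : (n - k) * n.choose k = n * (n-1).choose k := by
  cases n with
  | zero => simp
  | succ n =>
    simp only [Nat.add_sub_cancel]
    rw [mul_comm, ← Nat.choose_succ_right_eq, Nat.add_one_mul_choose_eq]

private lemma natAux2 (m j : ℕ) : (j+1).factorial * m.choose (j+1) = j.factorial * (m * (m-1).choose j) := by
  have h : (j+1) * m.choose (j+1) = m * (m-1).choose j := by
    rw [mul_comm, Nat.choose_succ_right_eq, mul_comm, natAux]
  rw [Nat.factorial_succ, mul_assoc, mul_left_comm, h]

section aux
variable (r : ℝ) (H : ℕ → ℝ)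
  (hH : ∀ m, H m = ∑ k ∈ Finset.range (m / 2 + 1),
      (-1 : ℝ) ^ k * ((m.factorial : ℝ) / ((k.factorial : ℝ) * ((m - 2 * k).factorial : ℝ))) *
        (2 * r) ^ (m - 2 * k))
include hH

private lemma H_zero : H 0 = 1 := by rw [hH]; norm_num

private lemma H_ext (p : ℕ) : H p = ∑ k ∈ range (p+1),
    (if 2*k ≤ p then (-1:ℝ)^k * ((p.factorial : ℝ) / ((k.factorial : ℝ) * ((p-2*k).factorial : ℝ))) else 0) * (2*r)^(p-2*k) := by
  have step : ∑ k ∈ range (p/2+1),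
      (if 2*k ≤ p then (-1:ℝ)^k * ((p.factorial : ℝ) / ((k.factorial : ℝ) * ((p-2*k).factorial : ℝ))) else 0) * (2*r)^(p-2*k)
      = ∑ k ∈ range (p+1),
      (if 2*k ≤ p then (-1:ℝ)^k * ((p.factorial : ℝ) / ((k.factorial : ℝ) * ((p-2*k).factorial : ℝ))) else 0) * (2*r)^(p-2*k) := by
    apply Finset.sum_subset (fun x hx => by simp only [mem_range] at *; omega)
    intro x hx hx'
    simp only [mem_range] at hx hx'
    rw [if_neg (by omega), zero_mul]
  rw [hH, ← step]
  exact Finset.sum_congr rfl fun x hx => by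
    rw [if_pos (by simp only [mem_range] at hx; omega)]

private lemma H_rec (p : ℕ) : H (p+1) = 2*r*H p - 2*p*H (p-1) := by
  cases p with
  | zero => rw [hH 1, hH 0]; norm_num
  | succ q =>
    simp only [Nat.add_sub_cancel]
    rw [H_ext r H hH (q+2), H_ext r H hH (q+1), H_ext r H hH q]
    set U : ℕ → ℝ := fun k => match k with
      | 0 => (0:ℝ)
      | j+1 => 2*((q:ℝ)+1) * ((if 2*j ≤ q then (-1:ℝ)^j * ((q.factorial : ℝ) / ((j.factorial : ℝ) * ((q-2*j).factorial : ℝ))) else 0) * (2*r)^(q-2*j)) with hUdef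
    have hU : ∑ k ∈ range (q+3), U k = 2*(q+1) * ∑ j ∈ range (q+1),
        (if 2*j ≤ q then (-1:ℝ)^j * ((q.factorial : ℝ) / ((j.factorial : ℝ) * ((q-2*j).factorial : ℝ))) else 0) * (2*r)^(q-2*j) := by
      rw [Finset.sum_range_succ' U (q+2)]
      have : ∀ j, U (j+1) = 2*((q:ℝ)+1) * ((if 2*j ≤ q then (-1:ℝ)^j * ((q.factorial : ℝ) / ((j.factorial : ℝ) * ((q-2*j).factorial : ℝ))) else 0) * (2*r)^(q-2*j)) := fun j => rfl
      simp only [this]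
      have hU0 : U 0 = 0 := rfl
      rw [hU0, add_zero, Finset.sum_range_succ, if_neg (by omega), zero_mul, mul_zero, add_zero,
        ← Finset.mul_sum]
    have key : ∑ k ∈ range (q+3),
        ((if 2*k ≤ q+2 then (-1:ℝ)^k * (((q+2).factorial : ℝ) / ((k.factorial : ℝ) * ((q+2-2*k).factorial : ℝ))) else 0) * (2*r)^(q+2-2*k) + U k)
        = ∑ k ∈ range (q+3), 2*r*((if 2*k ≤ q+1 then (-1:ℝ)^k * (((q+1).factorial : ℝ) / ((k.factorial : ℝ) * ((q+1-2*k).factorial : ℝ))) else 0) * (2*r)^(q+1-2*k)) := by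
      apply Finset.sum_congr rfl
      intro k hk
      match k with
      | 0 =>
        have hU0 : U 0 = 0 := rfl
        rw [hU0, add_zero, if_pos (by omega), if_pos (by omega)]
        simp only [Nat.sub_zero, Nat.mul_zero, Nat.factorial_zero, Nat.cast_one, one_mul, pow_zero]
        rw [div_self (Nat.cast_ne_zero.2 (q+2).factorial_ne_zero),
          div_self (Nat.cast_ne_zero.2 (q+1).factorial_ne_zero)]
        ring
      | j+1 =>
        have hUj : U (j+1) = 2*((q:ℝ)+1) * ((if 2*j ≤ q then (-1:ℝ)^j * ((q.factorial : ℝ) / ((j.factorial : ℝ) * ((q-2*j).factorial : ℝ))) else 0) * (2*r)^(q-2*j)) := rfl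
        rw [hUj]
        rcases lt_trichotomy (2*j) q with hc | hc | hc
        · -- 2j+1 ≤ q
          obtain ⟨d, rfl⟩ : ∃ d, q = 2*j+1+d := ⟨q-(2*j+1), by omega⟩
          rw [if_pos (by omega), if_pos (by omega), if_pos (by omega)]
          rw [show 2*j+1+d+2-2*(j+1) = d+1 by omega, show 2*j+1+d-2*j = d+1 by omega,
              show 2*j+1+d+1-2*(j+1) = d by omega,
              show 2*j+1+d+2 = (2*j+1+d+1)+1 by omega]
          have f1 : (((2*j+1+d+1)+1).factorial:ℝ) = ((2*j+1+d+2:ℕ):ℝ) * ((2*j+1+d+1:ℕ):ℝ) * ((2*j+1+d).factorial:ℝ) := by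
            rw [Nat.factorial_succ, Nat.factorial_succ]; push_cast; ring
          have f2 : ((2*j+1+d+1).factorial:ℝ) = ((2*j+1+d+1:ℕ):ℝ) * ((2*j+1+d).factorial:ℝ) := by
            rw [Nat.factorial_succ]; push_cast; ring
          have f3 : ((d+1).factorial:ℝ) = ((d+1:ℕ):ℝ) * (d.factorial:ℝ) := by
            rw [Nat.factorial_succ]; push_cast; ring
          have f4 : ((j+1).factorial:ℝ) = ((j+1:ℕ):ℝ) * (j.factorial:ℝ) := by
            rw [Nat.factorial_succ]; push_cast; ring
          have n1 : (j.factorial:ℝ) ≠ 0 := Nat.cast_ne_zero.2 j.factorial_ne_zero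
          have n2 : (d.factorial:ℝ) ≠ 0 := Nat.cast_ne_zero.2 d.factorial_ne_zero
          have n3 : ((2*j+1+d).factorial:ℝ) ≠ 0 := Nat.cast_ne_zero.2 (2*j+1+d).factorial_ne_zero
          rw [f1, f2, f3, f4, pow_succ]
          push_cast
          field_simp
          ring
        · -- 2j = q
          obtain rfl : q = 2*j := hc.symm
          rw [if_pos (by omega), if_pos (by omega), if_neg (by omega)]
          rw [show 2*j+2-2*(j+1) = 0 by omega, show 2*j-2*j = 0 by omega,
              show 2*j+2 = (2*j+1)+1 by omega, show 2*j+1 = (2*j)+1 by omega]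
          have f1 : ((((2*j)+1)+1).factorial:ℝ) = ((2*j+2:ℕ):ℝ) * ((2*j+1:ℕ):ℝ) * ((2*j).factorial:ℝ) := by
            rw [Nat.factorial_succ, Nat.factorial_succ]; push_cast; ring
          have f4 : ((j+1).factorial:ℝ) = ((j+1:ℕ):ℝ) * (j.factorial:ℝ) := by
            rw [Nat.factorial_succ]; push_cast; ring
          have n1 : (j.factorial:ℝ) ≠ 0 := Nat.cast_ne_zero.2 j.factorial_ne_zero
          rw [f1, f4]
          simp only [Nat.factorial_zero, pow_zero]
          push_cast
          field_simp
          ring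
        · -- 2j > q
          rw [if_neg (by omega), if_neg (by omega), if_neg (by omega)]
          ring
    rw [Finset.sum_add_distrib, hU] at key
    have e2 : ∑ k ∈ range (q+3), 2*r*((if 2*k ≤ q+1 then (-1:ℝ)^k * (((q+1).factorial : ℝ) / ((k.factorial : ℝ) * ((q+1-2*k).factorial : ℝ))) else 0) * (2*r)^(q+1-2*k))
        = 2*r*∑ k ∈ range (q+2), ((if 2*k ≤ q+1 then (-1:ℝ)^k * (((q+1).factorial : ℝ) / ((k.factorial : ℝ) * ((q+1-2*k).factorial : ℝ))) else 0) * (2*r)^(q+1-2*k)) := by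
      rw [Finset.mul_sum, Finset.sum_range_succ, if_neg (by omega), zero_mul, mul_zero, add_zero]
    rw [e2] at key
    push_cast
    linarith [key]
private lemma runge (N : ℕ) : ∀ m, H (m+N) = ∑ k ∈ range (N+1),
    (-2:ℝ)^k * (k.factorial:ℝ) * (m.choose k : ℝ) * (N.choose k : ℝ) * H (m-k) * H (N-k) := by
  induction N using Nat.strong_induction_on with
  | _ N IH =>
    match N with
    | 0 =>
      intro m
      simp [H_zero r H hH]
    | (n+1) =>
      intro m
      set a : ℕ → ℝ := fun k => (-2:ℝ)^k * (k.factorial:ℝ) * (m.choose k : ℝ) * (n.choose k : ℝ) * H (m-k) * H (n+1-k) with ha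
      set β : ℕ → ℝ := fun j => (-2:ℝ)^(j+1) * ((j+1).factorial:ℝ) * (m.choose (j+1) : ℝ) * (n.choose j : ℝ) * H (m-(j+1)) * H (n-j) with hb
      set cc : ℕ → ℝ := fun j => (-2:ℝ)^j * (j.factorial:ℝ) * ((m-1).choose j : ℝ) * (n.choose j : ℝ) * H (m-1-j) * H (n-j) with hc
      set bb : ℕ → ℝ := fun k => (-2:ℝ)^k * (k.factorial:ℝ) * (m.choose k : ℝ) * ((n-1).choose k : ℝ) * H (m-k) * H (n-1-k) with hbb
      -- step 1 : split the sum
      have step1 : ∑ k ∈ range (n+1+1),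
          (-2:ℝ)^k * (k.factorial:ℝ) * (m.choose k : ℝ) * ((n+1).choose k : ℝ) * H (m-k) * H (n+1-k)
          = (∑ j ∈ range (n+1), a (j+1) + ∑ j ∈ range (n+1), β j) + H m * H (n+1) := by
        rw [Finset.sum_range_succ' (fun k => (-2:ℝ)^k * (k.factorial:ℝ) * (m.choose k : ℝ) * ((n+1).choose k : ℝ) * H (m-k) * H (n+1-k)) (n+1)]
        rw [← Finset.sum_add_distrib]
        congr 1
        · apply Finset.sum_congr rfl
          intro j hj
          rw [Nat.choose_succ_succ (n) (j)]
          rw [ha, hb]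
          push_cast
          ring
        · simp [H_zero r H hH]
      -- step 2 : the `a` part collapses
      have step2 : ∑ j ∈ range (n+1), a (j+1) + H m * H (n+1) = ∑ k ∈ range (n+1), a k := by
        have h1 := Finset.sum_range_succ' a (n+1)
        have h2 := Finset.sum_range_succ a (n+1)
        have h3 : a (n+1) = 0 := by
          rw [ha]; simp [Nat.choose_succ_self]
        have h4 : a 0 = H m * H (n+1) := by
          rw [ha]; simp
        rw [h2, h3, add_zero, h4] at h1
        linarith
      -- step 3 : apply the recurrence inside `a`
      have step3 : ∑ k ∈ range (n+1), a k
          = 2*r*(∑ k ∈ range (n+1), (-2:ℝ)^k * (k.factorial:ℝ) * (m.choose k : ℝ) * (n.choose k : ℝ) * H (m-k) * H (n-k))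
            - 2*(n:ℝ)*(∑ k ∈ range (n+1), bb k) := by
        rw [Finset.mul_sum, Finset.mul_sum, ← Finset.sum_sub_distrib]
        apply Finset.sum_congr rfl
        intro k hk
        simp only [mem_range] at hk
        have hk' : k ≤ n := by omega
        rw [ha, hbb]
        simp only
        rw [show n+1-k = (n-k)+1 by omega, H_rec r H hH (n-k)]
        have hcast : ((n-k:ℕ):ℝ) * (n.choose k:ℝ) = (n:ℝ) * ((n-1).choose k:ℝ) := by
          exact_mod_cast congrArg (Nat.cast : ℕ → ℝ) (natAux n k)
        rw [show n-k-1 = n-1-k by omega] at *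
        linear_combination (-2 * ((-2:ℝ)^k * (k.factorial:ℝ) * (m.choose k:ℝ) * H (m-k) * H (n-1-k))) * hcast
      -- step 4 : the bb sum
      have step4 : (n:ℝ) * (∑ k ∈ range (n+1), bb k) = (n:ℝ) * H (m+(n-1)) := by
        cases n with
        | zero => norm_num
        | succ p =>
          congr 1
          rw [Finset.sum_range_succ]
          have hz : bb (p+1) = 0 := by
            rw [hbb]; simp [Nat.choose_succ_self]
          rw [hz, add_zero]
          rw [show p+1-1 = p from rfl]
          exact (IH p (by omega) m).symm
      -- step 5 : the β sum
      have step5 : ∑ j ∈ range (n+1), β j = -2*(m:ℝ) * H ((m-1)+n) := by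
        have : ∑ j ∈ range (n+1), β j = -2*(m:ℝ) * ∑ j ∈ range (n+1), cc j := by
          rw [Finset.mul_sum]
          apply Finset.sum_congr rfl
          intro j hj
          rw [hb, hc]
          simp only
          have hcast : (((j+1).factorial:ℕ):ℝ) * ((m.choose (j+1):ℕ):ℝ)
              = ((j.factorial:ℕ):ℝ) * ((m:ℕ):ℝ) * (((m-1).choose j:ℕ):ℝ) := by
            have := congrArg (Nat.cast : ℕ → ℝ) (natAux2 m j)
            push_cast at this
            linarith
          rw [pow_succ, show m-(j+1) = m-1-j by omega]
          linear_combination ((-2:ℝ)^j * (-2) * (n.choose j : ℝ) * H (m-1-j) * H (n-j)) * hcast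
        rw [this, IH n (by omega) (m-1)]
      -- assemble
      have hm : (m:ℝ) * H ((m-1)+n) = (m:ℝ) * H (m+n-1) := by
        cases m with
        | zero => norm_num
        | succ p =>
          have : p+1-1+n = p+1+n-1 := by omega
          rw [this]
      have hn : (n:ℝ) * H (m+(n-1)) = (n:ℝ) * H (m+n-1) := by
        cases n with
        | zero => norm_num
        | succ p =>
          have : m+(p+1-1) = m+(p+1)-1 := by omega
          rw [this]
      rw [step1, add_right_comm, step2, step3, step5, ← IH n (by omega) m]
      have h4' : (2:ℝ)*(n:ℝ)*(∑ k ∈ range (n+1), bb k) = 2*(n:ℝ)*H (m+n-1) := by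
        rw [mul_assoc, step4, hn, ← mul_assoc]
      have h5' : (-2:ℝ)*(m:ℝ)*H ((m-1)+n) = -2*(m:ℝ)*H (m+n-1) := by
        rw [mul_assoc, hm, ← mul_assoc]
      rw [h4', h5', show m+(n+1) = (m+n)+1 from rfl, H_rec r H hH (m+n)]
      push_cast
      ring
end aux

/-- The Hankel transform of the sequence of physicists' Hermite polynomial values
`Hₘ(r)` is `hₙ = (−1)^(n(n+1)/2)·∏_{k=0}^{n} 2ᵏ·k!`, independent of `r`. -/
theorem hankel_hermite (r : ℝ) (n : ℕ) (H : ℕ → ℝ)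
    (hH : ∀ m, H m = ∑ k ∈ Finset.range (m / 2 + 1),
      (-1 : ℝ) ^ k * ((m.factorial : ℝ) / ((k.factorial : ℝ) * ((m - 2 * k).factorial : ℝ))) *
        (2 * r) ^ (m - 2 * k)) :
    Matrix.det (Matrix.of fun i j : Fin (n + 1) => H ((i : ℕ) + (j : ℕ))) =
      (-1 : ℝ) ^ (n * (n + 1) / 2) *
        ∏ k ∈ Finset.range (n + 1), (2 : ℝ) ^ k * (k.factorial : ℝ) := by
  classical
  set A : Matrix (Fin (n+1)) (Fin (n+1)) ℝ :=
    Matrix.of (fun i k : Fin (n+1) => (((i:ℕ).choose (k:ℕ) : ℕ) : ℝ) * H ((i:ℕ) - (k:ℕ))) with hA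
  set D : Matrix (Fin (n+1)) (Fin (n+1)) ℝ :=
    Matrix.diagonal (fun k : Fin (n+1) => (-2:ℝ)^(k:ℕ) * (((k:ℕ).factorial : ℕ) : ℝ)) with hD
  have hfact : (Matrix.of fun i j : Fin (n + 1) => H ((i : ℕ) + (j : ℕ))) = A * D * A.transpose := by
    ext i j
    rw [Matrix.mul_apply]
    simp only [hA, hD, Matrix.mul_diagonal, Matrix.transpose_apply, Matrix.of_apply]
    have : ∀ k : Fin (n+1),
        (((i:ℕ).choose (k:ℕ) : ℕ) : ℝ) * H ((i:ℕ) - (k:ℕ)) * ((-2:ℝ)^(k:ℕ) * (((k:ℕ).factorial : ℕ) : ℝ))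
          * ((((j:ℕ).choose (k:ℕ) : ℕ) : ℝ) * H ((j:ℕ) - (k:ℕ)))
        = (fun t : ℕ => (-2:ℝ)^t * (t.factorial:ℝ) * ((i:ℕ).choose t : ℝ) * ((j:ℕ).choose t : ℝ) * H ((i:ℕ)-t) * H ((j:ℕ)-t)) (k:ℕ) := by
      intro k; simp only; ring
    rw [Finset.sum_congr rfl (fun k _ => this k)]
    rw [Fin.sum_univ_eq_sum_range (fun t : ℕ => (-2:ℝ)^t * (t.factorial:ℝ) * ((i:ℕ).choose t : ℝ) * ((j:ℕ).choose t : ℝ) * H ((i:ℕ)-t) * H ((j:ℕ)-t)) (n+1)]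
    rw [runge r H hH (j:ℕ) (i:ℕ)]
    apply Finset.sum_subset
    · intro x hx; simp only [mem_range] at *; have := j.isLt; omega
    · intro x hx hx'
      simp only [mem_range] at hx hx'
      have : (j:ℕ).choose x = 0 := Nat.choose_eq_zero_of_lt (by omega)
      simp [this]
  rw [hfact, Matrix.det_mul, Matrix.det_mul, Matrix.det_transpose]
  have hAdet : A.det = 1 := by
    have htri : A.BlockTriangular OrderDual.toDual := by
      intro i j hij
      simp only [hA, Matrix.of_apply]
      have : (i:ℕ).choose (j:ℕ) = 0 := Nat.choose_eq_zero_of_lt (by exact_mod_cast hij)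
      simp [this]
    rw [Matrix.det_of_lowerTriangular A htri]
    apply Finset.prod_eq_one
    intro i _
    simp [hA, H_zero r H hH]
  have hDdet : D.det = ∏ k ∈ range (n+1), (-2:ℝ)^k * (k.factorial:ℝ) := by
    rw [hD, Matrix.det_diagonal]
    exact Fin.prod_univ_eq_prod_range (fun t => (-2:ℝ)^t * (t.factorial:ℝ)) (n+1)
  rw [hAdet, hDdet, one_mul, mul_one]
  have split : ∏ k ∈ range (n+1), (-2:ℝ)^k * (k.factorial:ℝ)
      = (∏ k ∈ range (n+1), (-1:ℝ)^k) * ∏ k ∈ range (n+1), (2:ℝ)^k * (k.factorial:ℝ) := by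
    rw [← Finset.prod_mul_distrib]
    apply Finset.prod_congr rfl
    intro k _
    rw [neg_pow]; ring
  rw [split, Finset.prod_pow_eq_pow_sum, Finset.sum_range_id]
  rw [show (n+1)*(n+1-1)/2 = n*(n+1)/2 by rw [Nat.add_sub_cancel, Nat.mul_comm]]
end
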